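/- arXiv:2403.06578 — 8 statements merged into one kernel-verified Lean document; each statement's English description precedes it below -/
import Mathlib

section
/- The spectrum of the triangular-lattice Laplacian Δ_T, as a bounded operator on ℓ²(ℤ²,ℂ), equals the closed interval [−1/2, 1]. -/
open scoped ENNReal
open Filter

noncomputable section

/-- The Hilbert space `ℓ²(ℤ², ℂ)`. -/
abbrev H2 : Type := lp (fun _ : ℤ × ℤ => ℂ) 2

/-- The triangular-lattice Laplacian, acting pointwise on functions `ℤ² → ℂ`. -/
def lapT (f : ℤ × ℤ → ℂ) : ℤ × ℤ → ℂ := fun n =>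
  (1/6 : ℂ) * (f (n.1 + 1, n.2) + f (n.1 - 1, n.2) + f (n.1, n.2 + 1)
    + f (n.1, n.2 - 1) + f (n.1 + 1, n.2 - 1) + f (n.1 - 1, n.2 + 1))

/-- The symbol `F(x₁,x₂) = (1/3)(cos x₁ + cos x₂ + cos (x₁ - x₂))`. -/
def symbF (x : ℝ × ℝ) : ℝ := (1/3) * (Real.cos x.1 + Real.cos x.2 + Real.cos (x.1 - x.2))

/-- `∂₁ F`. -/
def d1F (x : ℝ × ℝ) : ℝ := -(1/3) * (Real.sin x.1 + Real.sin (x.1 - x.2))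

/-- `∂₂ F`. -/
def d2F (x : ℝ × ℝ) : ℝ := -(1/3) * (Real.sin x.2 - Real.sin (x.1 - x.2))

/-- Japanese bracket `⟨t⟩ = √(1/2 + t²)`. -/
def jap (t : ℝ) : ℝ := Real.sqrt (1/2 + t^2)

/-- The weight `Λ(n₁,n₂) = ⟨n₁⟩ + ⟨n₂⟩`. -/
def Lam (n : ℤ × ℤ) : ℝ := jap (n.1 : ℝ) + jap (n.2 : ℝ)

/-- The conjugate operator `A`, acting pointwise on functions `ℤ² → ℂ`. -/
def opA (f : ℤ × ℤ → ℂ) : ℤ × ℤ → ℂ := fun n =>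
  (Complex.I / 6) *
    (((n.1 : ℂ) + 1/2) * f (n.1 + 1, n.2) - ((n.1 : ℂ) - 1/2) * f (n.1 - 1, n.2)
      + ((n.2 : ℂ) + 1/2) * f (n.1, n.2 + 1) - ((n.2 : ℂ) - 1/2) * f (n.1, n.2 - 1)
      + ((n.2 : ℂ) - (n.1 : ℂ) + 1) * f (n.1 - 1, n.2 + 1)
      + ((n.1 : ℂ) - (n.2 : ℂ) + 1) * f (n.1 + 1, n.2 - 1))

/-- The perturbed Laplacian `Δ̃` with weight `m`, acting pointwise on functions `ℤ² → ℂ`: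
`(Δ̃ f)(n) = (1/6) Σ_{l ∼ n} f(l) / (√(m n) √(m l))`. -/
def lapPert (m : ℤ × ℤ → ℝ) (f : ℤ × ℤ → ℂ) : ℤ × ℤ → ℂ := fun n =>
  (1/6 : ℂ) *
    (f (n.1 + 1, n.2) / ((Real.sqrt (m n) * Real.sqrt (m (n.1 + 1, n.2)) : ℝ) : ℂ)
      + f (n.1 - 1, n.2) / ((Real.sqrt (m n) * Real.sqrt (m (n.1 - 1, n.2)) : ℝ) : ℂ)
      + f (n.1, n.2 + 1) / ((Real.sqrt (m n) * Real.sqrt (m (n.1, n.2 + 1)) : ℝ) : ℂ)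
      + f (n.1, n.2 - 1) / ((Real.sqrt (m n) * Real.sqrt (m (n.1, n.2 - 1)) : ℝ) : ℂ)
      + f (n.1 + 1, n.2 - 1) / ((Real.sqrt (m n) * Real.sqrt (m (n.1 + 1, n.2 - 1)) : ℝ) : ℂ)
      + f (n.1 - 1, n.2 + 1) / ((Real.sqrt (m n) * Real.sqrt (m (n.1 - 1, n.2 + 1)) : ℝ) : ℂ))

/-!
Write `S v` for the translation `f ↦ f (· + v)` on `ℓ²(ℤ²)`, so that `6 Δ_T = ∑ S v` over the six
neighbours `v` of the origin. Since `star (S v) = S (-v)` and `S v * S w = S (v + w)`,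
`6 Δ_T + 3 = star B * B` with `B = 1 + S (1, 0) + S (0, 1)`, and `6 - 6 Δ_T` is the sum of the
three squares of `1 - S (1, 0)`, `1 - S (0, 1)` and `S (1, 0) - S (0, 1)`. Hence `-1/2 ≤ Δ_T ≤ 1`
in the order of the C⋆-algebra of operators, which confines the spectrum to `[-1/2, 1]`.

Conversely `Δ_T` maps the plane wave `n ↦ exp (i ξ · n)` to `symbF ξ` times itself, and `symbF`
takes every value in `[-1/2, 1]`. Damping the plane wave by `exp (-ε (|n₁| + |n₂|))` gives a vector
of `ℓ²` on which `Δ_T - symbF ξ` has norm at most `4 ε` times its own, because the damping factor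
changes by a relative amount of at most `4 ε` between neighbours; so `symbF ξ` is an approximate
eigenvalue.
-/

open scoped InnerProductSpace
open ContinuousLinearMap

theorem Memℓp.comp_add_right {G E : Type*} [AddGroup G] [NormedAddCommGroup E] {p : ℝ≥0∞}
    (hp : 0 < p.toReal) {f : G → E} (hf : Memℓp f p) (v : G) : Memℓp (fun n => f (n + v)) p := by
  rw [memℓp_gen_iff hp] at hf ⊢
  exact hf.comp_injective (add_left_injective v)

namespace lp

variable {G 𝕜 E : Type*} [AddGroup G] [RCLike 𝕜]

section NormedSpace

variable [NormedAddCommGroup E] [NormedSpace 𝕜 E]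

def translate (v : G) : lp (fun _ : G => E) 2 →L[𝕜] lp (fun _ : G => E) 2 :=
  LinearMap.mkContinuous
    { toFun := fun f => ⟨fun n => f (n + v), (lp.memℓp f).comp_add_right (by norm_num) v⟩
      map_add' := fun _ _ => rfl
      map_smul' := fun _ _ => rfl } 1
    fun f => by
      rw [one_mul]
      refine lp.norm_le_of_tsum_le (by norm_num) (norm_nonneg f) (le_of_eq ?_)
      rw [lp.norm_rpow_eq_tsum (by norm_num)]
      exact (Equiv.addRight v).tsum_eq fun n => ‖f n‖ ^ (2 : ℝ≥0∞).toReal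

@[simp]
theorem translate_apply (v : G) (f : lp (fun _ : G => E) 2) (n : G) :
    translate (𝕜 := 𝕜) v f n = f (n + v) :=
  rfl

theorem translate_mul_translate (v w : G) :
    (translate v * translate w : lp (fun _ : G => E) 2 →L[𝕜] _) = translate (v + w) := by
  ext f n
  simp [add_assoc]

@[simp]
theorem translate_zero : (translate 0 : lp (fun _ : G => E) 2 →L[𝕜] _) = 1 := by
  ext f n
  simp

end NormedSpace

theorem star_translate [NormedAddCommGroup E] [InnerProductSpace 𝕜 E] [CompleteSpace E] (v : G) :
    star (translate v : lp (fun _ : G => E) 2 →L[𝕜] _) = translate (-v) := by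
  rw [star_eq_adjoint, eq_comm, eq_adjoint_iff]
  intro f g
  rw [lp.inner_eq_tsum, lp.inner_eq_tsum]
  simp only [translate_apply]
  exact ((Equiv.addRight v).tsum_eq fun n => ⟪f (n + -v), g n⟫_𝕜).symm.trans (by simp)

end lp

theorem ContinuousLinearMap.not_isUnit_of_forall_exists_norm_apply_le {𝕜 E : Type*}
    [NontriviallyNormedField 𝕜] [NormedAddCommGroup E] [NormedSpace 𝕜 E] {A : E →L[𝕜] E}
    (h : ∀ δ > 0, ∃ f, f ≠ 0 ∧ ‖A f‖ ≤ δ * ‖f‖) : ¬IsUnit A := by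
  rintro ⟨u, rfl⟩
  set C := ‖(↑u⁻¹ : E →L[𝕜] E)‖
  obtain ⟨f, hf0, hf⟩ := h (C + 1)⁻¹ (by positivity)
  have hC : C / (C + 1) < 1 := (div_lt_one (by positivity)).2 (lt_add_one C)
  have : ‖f‖ ≤ C / (C + 1) * ‖f‖ := calc
    ‖f‖ = ‖(↑u⁻¹ : E →L[𝕜] E) ((u : E →L[𝕜] E) f)‖ := by
      rw [← mul_apply_eq_comp, Units.inv_mul, one_apply_eq_self]
    _ ≤ C * ‖(u : E →L[𝕜] E) f‖ := le_opNorm _ _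
    _ ≤ C * ((C + 1)⁻¹ * ‖f‖) := by gcongr
    _ = C / (C + 1) * ‖f‖ := by ring
  exact (this.trans_lt (mul_lt_of_lt_one_left (norm_pos_iff.2 hf0) hC)).false

open scoped ComplexOrder in
theorem spectrum_subset_ofReal_Icc {A : Type*} [CStarAlgebra A] [PartialOrder A]
    [StarOrderedRing A] {a : A} {r s : ℝ} (hr : algebraMap ℂ A r ≤ a)
    (hs : a ≤ algebraMap ℂ A s) : spectrum ℂ a ⊆ Complex.ofReal '' Set.Icc r s := by
  intro z hz
  have hzr : 0 ≤ z - r := spectrum_nonneg_of_nonneg (sub_nonneg.2 hr)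
    (by rw [← spectrum.sub_singleton_eq]; exact Set.sub_mem_sub hz rfl)
  have hzs : 0 ≤ s - z := spectrum_nonneg_of_nonneg (sub_nonneg.2 hs)
    (by rw [← spectrum.singleton_sub_eq]; exact Set.sub_mem_sub rfl hz)
  rw [Complex.nonneg_iff] at hzr hzs
  simp only [Complex.sub_re, Complex.sub_im, Complex.ofReal_re, Complex.ofReal_im] at hzr hzs
  exact ⟨z.re, ⟨by linarith, by linarith⟩, Complex.ext (by simp) (by simp; linarith)⟩

def triangularNeighbours : Finset (ℤ × ℤ) := {(1, 0), (-1, 0), (0, 1), (0, -1), (1, -1), (-1, 1)}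

theorem sum_triangularNeighbours {M : Type*} [AddCommMonoid M] (g : ℤ × ℤ → M) :
    ∑ v ∈ triangularNeighbours, g v
      = g (1, 0) + g (-1, 0) + g (0, 1) + g (0, -1) + g (1, -1) + g (-1, 1) := by
  simp [triangularNeighbours, add_assoc]

theorem card_triangularNeighbours : triangularNeighbours.card = 6 := rfl

theorem abs_add_abs_le_two_of_mem_triangularNeighbours {v : ℤ × ℤ}
    (hv : v ∈ triangularNeighbours) : |(v.1 : ℝ)| + |(v.2 : ℝ)| ≤ 2 := by
  simp only [triangularNeighbours, Finset.mem_insert, Finset.mem_singleton] at hv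
  rcases hv with rfl | rfl | rfl | rfl | rfl | rfl <;> norm_num

theorem lapT_eq_sum (f : ℤ × ℤ → ℂ) (n : ℤ × ℤ) :
    lapT f n = (1 / 6) * ∑ v ∈ triangularNeighbours, f (n + v) := by
  obtain ⟨a, b⟩ := n
  simp [lapT, sum_triangularNeighbours, sub_eq_add_neg]

def planeWave (ξ : ℝ × ℝ) (n : ℤ × ℤ) : ℂ :=
  Complex.exp (((ξ.1 * n.1 + ξ.2 * n.2 : ℝ) : ℂ) * Complex.I)

theorem norm_planeWave (ξ : ℝ × ℝ) (n : ℤ × ℤ) : ‖planeWave ξ n‖ = 1 :=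
  Complex.norm_exp_ofReal_mul_I _

theorem planeWave_add (ξ : ℝ × ℝ) (n v : ℤ × ℤ) :
    planeWave ξ (n + v) = planeWave ξ n * planeWave ξ v := by
  simp only [planeWave, ← Complex.exp_add, Prod.fst_add, Prod.snd_add]
  push_cast
  ring_nf

theorem sum_triangularNeighbours_planeWave (ξ : ℝ × ℝ) :
    ∑ v ∈ triangularNeighbours, planeWave ξ v = 6 * symbF ξ := by
  have h2cos (x : ℝ) : Complex.exp (x * Complex.I) + Complex.exp (-x * Complex.I)
      = 2 * Real.cos x := by
    rw [Complex.ofReal_cos, Complex.two_cos]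
  calc ∑ v ∈ triangularNeighbours, planeWave ξ v
      = (Complex.exp (ξ.1 * Complex.I) + Complex.exp (-ξ.1 * Complex.I))
        + (Complex.exp (ξ.2 * Complex.I) + Complex.exp (-ξ.2 * Complex.I))
        + (Complex.exp ((ξ.1 - ξ.2 : ℝ) * Complex.I)
          + Complex.exp (-(ξ.1 - ξ.2 : ℝ) * Complex.I)) := by
        simp only [sum_triangularNeighbours, planeWave]
        push_cast
        ring_nf
    _ = 6 * symbF ξ := by
        rw [h2cos, h2cos, h2cos, symbF]
        push_cast
        ring

theorem lapT_planeWave (ξ : ℝ × ℝ) (n : ℤ × ℤ) :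
    lapT (planeWave ξ) n = symbF ξ * planeWave ξ n := by
  simp only [lapT_eq_sum, planeWave_add, ← Finset.mul_sum, sum_triangularNeighbours_planeWave]
  ring

theorem Icc_subset_range_symbF : Set.Icc (-(1 / 2)) 1 ⊆ Set.range symbF := by
  have h_max : symbF (0, 0) = 1 := by norm_num [symbF]
  have h_min : symbF (2 * Real.pi / 3, -(2 * Real.pi / 3)) = -(1 / 2) := by
    have h1 : Real.cos (2 * Real.pi / 3) = -(1 / 2) := by
      rw [show 2 * Real.pi / 3 = Real.pi - Real.pi / 3 by ring, Real.cos_pi_sub,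
        Real.cos_pi_div_three]
    have h2 : Real.cos (2 * Real.pi / 3 - -(2 * Real.pi / 3)) = -(1 / 2) := by
      rw [show 2 * Real.pi / 3 - -(2 * Real.pi / 3) = Real.pi / 3 + Real.pi by ring,
        Real.cos_add_pi, Real.cos_pi_div_three]
    simp only [symbF, Real.cos_neg, h1, h2]
    norm_num
  have h_cont : Continuous symbF := by unfold symbF; fun_prop
  have := isPreconnected_univ.intermediate_value
    (Set.mem_univ (2 * Real.pi / 3, -(2 * Real.pi / 3))) (Set.mem_univ (0, 0)) h_cont.continuousOn
  rwa [h_max, h_min, Set.image_univ] at this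

def expWeight (ε : ℝ) (n : ℤ × ℤ) : ℝ := Real.exp (-ε * (|(n.1 : ℝ)| + |(n.2 : ℝ)|))

theorem expWeight_pos (ε : ℝ) (n : ℤ × ℤ) : 0 < expWeight ε n := Real.exp_pos _

theorem abs_expWeight_add_sub_le {ε : ℝ} (hε : 0 ≤ ε) (n v : ℤ × ℤ)
    (hv : ε * (|(v.1 : ℝ)| + |(v.2 : ℝ)|) ≤ 1) :
    |expWeight ε (n + v) - expWeight ε n|
      ≤ 2 * ε * (|(v.1 : ℝ)| + |(v.2 : ℝ)|) * expWeight ε n := by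
  set d := (|((n.1 + v.1 : ℤ) : ℝ)| + |((n.2 + v.2 : ℤ) : ℝ)|) - (|(n.1 : ℝ)| + |(n.2 : ℝ)|)
  have hd : |d| ≤ |(v.1 : ℝ)| + |(v.2 : ℝ)| := by
    push_cast [d]
    have h1 := abs_abs_sub_abs_le_abs_sub ((n.1 : ℝ) + v.1) n.1
    have h2 := abs_abs_sub_abs_le_abs_sub ((n.2 : ℝ) + v.2) n.2
    simp only [add_sub_cancel_left] at h1 h2
    calc _ = |(|(n.1 : ℝ) + v.1| - |(n.1 : ℝ)|) + (|(n.2 : ℝ) + v.2| - |(n.2 : ℝ)|)| := by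
          ring_nf
      _ ≤ _ := (abs_add_le _ _).trans (add_le_add h1 h2)
  have hsplit : expWeight ε (n + v) - expWeight ε n
      = expWeight ε n * (Real.exp (-ε * d) - 1) := by
    rw [expWeight, expWeight, mul_sub, mul_one, ← Real.exp_add]
    congr 2
    simp only [d, Prod.fst_add, Prod.snd_add]
    ring
  have hexp : |Real.exp (-ε * d) - 1| ≤ 2 * |-ε * d| := Real.abs_exp_sub_one_le (by
    rw [abs_mul, abs_neg, abs_of_nonneg hε]
    exact (mul_le_mul_of_nonneg_left hd hε).trans hv)
  rw [hsplit, abs_mul, abs_of_pos (expWeight_pos ε n)]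
  rw [abs_mul, abs_neg, abs_of_nonneg hε] at hexp
  have hw := (expWeight_pos ε n).le
  calc _ ≤ expWeight ε n * (2 * (ε * |d|)) := by gcongr
    _ ≤ expWeight ε n * (2 * (ε * (|(v.1 : ℝ)| + |(v.2 : ℝ)|))) := by gcongr
    _ = _ := by ring

theorem summable_exp_neg_mul_abs {c : ℝ} (hc : 0 < c) :
    Summable fun a : ℤ => Real.exp (-c * |(a : ℝ)|) := by
  have h : Summable fun k : ℕ => Real.exp (-c * k) := by
    simpa [mul_comm] using Real.summable_exp_nat_mul_iff.2 (neg_lt_zero.2 hc)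
  exact .of_nat_of_neg (by simpa using h) (by simpa using h)

theorem norm_lapT_mul_planeWave_sub_le (ψ : ℤ × ℤ → ℝ) (ξ : ℝ × ℝ) (n : ℤ × ℤ) {c : ℝ}
    (h : ∀ v ∈ triangularNeighbours, |ψ (n + v) - ψ n| ≤ c) :
    ‖lapT (fun m => (ψ m : ℂ) * planeWave ξ m) n - symbF ξ * (ψ n * planeWave ξ n)‖ ≤ c := by
  have h_eq : lapT (fun m => (ψ m : ℂ) * planeWave ξ m) n - symbF ξ * (ψ n * planeWave ξ n)
      = (1 / 6) * ∑ v ∈ triangularNeighbours, ((ψ (n + v) - ψ n : ℝ) : ℂ) * planeWave ξ (n + v) := by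
    rw [mul_left_comm, ← lapT_planeWave, lapT_eq_sum, lapT_eq_sum]
    push_cast
    simp only [sub_mul, Finset.sum_sub_distrib, ← Finset.mul_sum]
    ring
  rw [h_eq, norm_mul]
  calc ‖(1 / 6 : ℂ)‖ * _ ≤ ‖(1 / 6 : ℂ)‖ * ∑ _v ∈ triangularNeighbours, c := by
        gcongr
        refine (norm_sum_le _ _).trans (Finset.sum_le_sum fun v hv => ?_)
        rw [norm_mul, norm_planeWave, mul_one, Complex.norm_real, Real.norm_eq_abs]
        exact h v hv
    _ = c := by simp [card_triangularNeighbours]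


def dampedWave (ε : ℝ) (ξ : ℝ × ℝ) (n : ℤ × ℤ) : ℂ := expWeight ε n * planeWave ξ n

theorem norm_dampedWave (ε : ℝ) (ξ : ℝ × ℝ) (n : ℤ × ℤ) : ‖dampedWave ε ξ n‖ = expWeight ε n := by
  rw [dampedWave, norm_mul, norm_planeWave, mul_one, Complex.norm_real,
    Real.norm_of_nonneg (expWeight_pos ε n).le]

theorem memℓp_dampedWave {ε : ℝ} (hε : 0 < ε) (ξ : ℝ × ℝ) : Memℓp (dampedWave ε ξ) 2 := by
  rw [memℓp_gen_iff (by norm_num : (0 : ℝ) < (2 : ℝ≥0∞).toReal)]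
  have h := (summable_exp_neg_mul_abs (by positivity : 0 < 2 * ε)).mul_of_nonneg
    (summable_exp_neg_mul_abs (by positivity : 0 < 2 * ε)) (fun _ => (Real.exp_pos _).le)
    (fun _ => (Real.exp_pos _).le)
  refine h.congr fun n => ?_
  rw [norm_dampedWave, ENNReal.toReal_ofNat, Real.rpow_two, sq, expWeight, ← Real.exp_add,
    ← Real.exp_add]
  ring_nf

theorem norm_lapT_dampedWave_sub_le {ε : ℝ} (hε₀ : 0 ≤ ε) (hε : ε ≤ 1 / 2) (ξ : ℝ × ℝ)
    (n : ℤ × ℤ) :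
    ‖lapT (dampedWave ε ξ) n - symbF ξ * dampedWave ε ξ n‖ ≤ 4 * ε * ‖dampedWave ε ξ n‖ := by
  rw [norm_dampedWave]
  refine norm_lapT_mul_planeWave_sub_le (expWeight ε) ξ n fun v hv => ?_
  have hv₂ := abs_add_abs_le_two_of_mem_triangularNeighbours hv
  have hw := (expWeight_pos ε n).le
  calc _ ≤ 2 * ε * (|(v.1 : ℝ)| + |(v.2 : ℝ)|) * expWeight ε n :=
        abs_expWeight_add_sub_le hε₀ n v (by nlinarith [abs_nonneg (v.1 : ℝ)])
    _ ≤ 2 * ε * 2 * expWeight ε n := by gcongr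
    _ = 4 * ε * expWeight ε n := by ring

local notation "S" => (lp.translate : ℤ × ℤ → H2 →L[ℂ] H2)

theorem star_mul_self_eq_three_add_sum_translate :
    star (1 + S (1, 0) + S (0, 1)) * (1 + S (1, 0) + S (0, 1))
      = 3 + ∑ v ∈ triangularNeighbours, S v := by
  simp only [star_add, star_one, lp.star_translate, add_mul, mul_add, one_mul, mul_one,
    lp.translate_mul_translate, Prod.neg_mk, Prod.mk_add_mk, sum_triangularNeighbours]
  norm_num [Prod.mk_zero_zero]
  rw [show (3 : H2 →L[ℂ] H2) = 1 + 1 + 1 by norm_num]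
  abel

theorem sum_star_mul_self_eq_six_sub_sum_translate :
    star (1 - S (1, 0)) * (1 - S (1, 0)) + star (1 - S (0, 1)) * (1 - S (0, 1))
      + star (S (1, 0) - S (0, 1)) * (S (1, 0) - S (0, 1))
      = 6 - ∑ v ∈ triangularNeighbours, S v := by
  simp only [star_sub, star_one, lp.star_translate, sub_mul, mul_sub, one_mul, mul_one,
    lp.translate_mul_translate, Prod.neg_mk, Prod.mk_add_mk, sum_triangularNeighbours]
  norm_num [Prod.mk_zero_zero]
  rw [show (6 : H2 →L[ℂ] H2) = 1 + 1 + 1 + 1 + 1 + 1 by norm_num]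
  abel

namespace TriangularLaplacian

variable {T : H2 →L[ℂ] H2} (hT : ∀ (f : H2) (n : ℤ × ℤ), T f n = lapT (⇑f) n)
include hT

open scoped ComplexOrder

theorem eq_smul_sum_translate : T = (6 : ℂ)⁻¹ • ∑ v ∈ triangularNeighbours, S v := by
  ext f n
  simp only [hT, lapT_eq_sum, smul_apply, sum_apply, lp.coeFn_smul, lp.coeFn_sum]
  rw [Pi.smul_apply, Finset.sum_apply]
  simp

theorem algebraMap_neg_half_le : algebraMap ℂ (H2 →L[ℂ] H2) (-(1 / 2) : ℝ) ≤ T := by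
  rw [← sub_nonneg]
  have : T - algebraMap ℂ (H2 →L[ℂ] H2) (-(1 / 2) : ℝ)
      = (6 : ℂ)⁻¹ • (star (1 + S (1, 0) + S (0, 1)) * (1 + S (1, 0) + S (0, 1))) := by
    rw [star_mul_self_eq_three_add_sum_translate, eq_smul_sum_translate hT,
      Algebra.algebraMap_eq_smul_one, ← map_ofNat (algebraMap ℂ (H2 →L[ℂ] H2)) 3,
      Algebra.algebraMap_eq_smul_one]
    push_cast
    module
  rw [this]
  exact smul_nonneg (by rw [Complex.nonneg_iff]; norm_num) (star_mul_self_nonneg _)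

theorem le_algebraMap_one : T ≤ algebraMap ℂ (H2 →L[ℂ] H2) (1 : ℝ) := by
  rw [← sub_nonneg]
  have : algebraMap ℂ (H2 →L[ℂ] H2) (1 : ℝ) - T
      = (6 : ℂ)⁻¹ • (star (1 - S (1, 0)) * (1 - S (1, 0)) + star (1 - S (0, 1)) * (1 - S (0, 1))
        + star (S (1, 0) - S (0, 1)) * (S (1, 0) - S (0, 1))) := by
    rw [sum_star_mul_self_eq_six_sub_sum_translate, eq_smul_sum_translate hT,
      Complex.ofReal_one, map_one, ← map_ofNat (algebraMap ℂ (H2 →L[ℂ] H2)) 6,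
      Algebra.algebraMap_eq_smul_one]
    module
  rw [this]
  exact smul_nonneg (by rw [Complex.nonneg_iff]; norm_num) (add_nonneg (add_nonneg
    (star_mul_self_nonneg _) (star_mul_self_nonneg _)) (star_mul_self_nonneg _))

theorem ofReal_symbF_mem_spectrum (ξ : ℝ × ℝ) : (symbF ξ : ℂ) ∈ spectrum ℂ T := by
  rw [spectrum.mem_iff]
  refine not_isUnit_of_forall_exists_norm_apply_le fun δ hδ => ?_
  set ε := min (δ / 4) (1 / 2)
  have hε : 0 < ε := lt_min (by positivity) (by norm_num)
  let f : H2 := ⟨dampedWave ε ξ, memℓp_dampedWave hε ξ⟩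
  have hf₀ : f 0 = 1 := by simp [f, dampedWave, expWeight, planeWave]
  refine ⟨f, fun hf => by simp [hf] at hf₀, ?_⟩
  calc ‖(algebraMap ℂ (H2 →L[ℂ] H2) (symbF ξ) - T) f‖ ≤ ‖((4 * ε : ℝ) : ℂ) • f‖ := by
        refine lp.norm_mono two_ne_zero fun n => ?_
        rw [sub_apply, lp.coeFn_sub, Pi.sub_apply, hT, Algebra.algebraMap_eq_smul_one, smul_apply,
          one_apply_eq_self, lp.coeFn_smul, Pi.smul_apply, smul_eq_mul, norm_sub_rev, lp.coeFn_smul,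
          Pi.smul_apply, norm_smul, Complex.norm_real, Real.norm_of_nonneg (by positivity)]
        exact norm_lapT_dampedWave_sub_le hε.le (min_le_right _ _) ξ n
    _ = 4 * ε * ‖f‖ := by
        rw [lp.norm_const_smul two_ne_zero, Complex.norm_real, Real.norm_of_nonneg (by positivity)]
    _ ≤ δ * ‖f‖ := by
        gcongr
        linarith [min_le_left (δ / 4) (1 / 2)]

end TriangularLaplacian

/-- The spectrum of the triangular-lattice Laplacian `Δ_T`, as a bounded operator on
`ℓ²(ℤ²,ℂ)`, equals the closed interval `[-1/2, 1]`. -/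
theorem spectrum_triangular_laplacian (T : H2 →L[ℂ] H2)
    (hT : ∀ (f : H2) (n : ℤ × ℤ), T f n = lapT (⇑f) n) :
    spectrum ℂ T = Complex.ofReal '' Set.Icc (-(1/2) : ℝ) 1 := by
  refine (spectrum_subset_ofReal_Icc (TriangularLaplacian.algebraMap_neg_half_le hT)
    (TriangularLaplacian.le_algebraMap_one hT)).antisymm ?_
  rintro _ ⟨r, hr, rfl⟩
  obtain ⟨ξ, rfl⟩ := Icc_subset_range_symbF hr
  exact TriangularLaplacian.ofReal_symbF_mem_spectrum hT ξ
end
end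

section
/- The range of the symbol F over ℝ² equals the closed interval [−1/2, 1]. -/
/-!
The bound `F ≤ 1` is termwise. The bound `F ≥ -1/2` is `|1 + e^{i x₁} + e^{i x₂}|² ≥ 0`, since
`(1 + cos x₁ + cos x₂)² + (sin x₁ + sin x₂)² = 3 + 2 (cos x₁ + cos x₂ + cos (x₁ - x₂))`.
Both bounds are attained (at `0` and at `(2π/3, -2π/3)`), and the range of the continuous `F`
on the connected `ℝ²` is an interval.
-/

open scoped ENNReal
open Filter

noncomputable section

open Real

theorem neg_three_halves_le_cos_add_cos_add_cos_sub (a b : ℝ) :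
    -(3/2) ≤ cos a + cos b + cos (a - b) := by
  have hsq : 0 ≤ (1 + cos a + cos b) ^ 2 + (sin a + sin b) ^ 2 := by positivity
  nlinarith [cos_sub a b, sin_sq_add_cos_sq a, sin_sq_add_cos_sq b]

theorem symbF_mem_Icc (x : ℝ × ℝ) : symbF x ∈ Set.Icc (-(1/2) : ℝ) 1 := by
  unfold symbF
  constructor
  · linarith [neg_three_halves_le_cos_add_cos_add_cos_sub x.1 x.2]
  · linarith [cos_le_one x.1, cos_le_one x.2, cos_le_one (x.1 - x.2)]

theorem continuous_symbF : Continuous symbF := by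
  unfold symbF
  fun_prop

theorem symbF_zero : symbF 0 = 1 := by
  norm_num [symbF]

theorem cos_two_pi_div_three : cos (2 * π / 3) = -(1/2) := by
  rw [show 2 * π / 3 = π - π / 3 by ring, cos_pi_sub, cos_pi_div_three]

theorem symbF_two_pi_div_three : symbF (2 * π / 3, -(2 * π / 3)) = -(1/2) := by
  have hsub : cos (2 * π / 3 - -(2 * π / 3)) = -(1/2) := by
    rw [show 2 * π / 3 - -(2 * π / 3) = π / 3 + π by ring, cos_add_pi, cos_pi_div_three]
  simp only [symbF, cos_neg, cos_two_pi_div_three, hsub]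
  norm_num

/-- The range of the symbol `F` over `ℝ²` equals `[-1/2, 1]`. -/
theorem range_symbF : Set.range symbF = Set.Icc (-(1/2) : ℝ) 1 := by
  refine Set.Subset.antisymm (Set.range_subset_iff.2 symbF_mem_Icc) ?_
  exact (isPreconnected_range continuous_symbF).Icc_subset
    ⟨_, symbF_two_pi_div_three⟩ ⟨0, symbF_zero⟩
end
end

section
/- For x = (x₁,x₂) ∈ (−π,π]², the gradient of F vanishes at x (equivalently, sin(x₁) + sin(x₁−x₂) = 0 and sin(x₂) − sin(x₁−x₂) = 0) if and only if x belongs to the six-element set {(π,π), (0,π), (0,0), (π,0), (2π/3,−2π/3), (−2π/3,2π/3)}. -/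
open scoped ENNReal
open Filter

noncomputable section

/-!
Adding the two equations gives `sin b = -sin a`; substituted into the first, it becomes
`sin a * (1 + cos a + cos b) = 0`. Off `sin a = 0`, the relation `cos² a = cos² b` (from
`sin² a = sin² b`) together with `cos a + cos b = -1` forces `cos a = cos b = -1/2`. On `(-π, π]`
each of `sin t = 0` and `cos t = -1/2` has exactly two solutions, and `sin b = -sin a` discards
`a = b = ±2π/3`.
-/

namespace Real

theorem cos_two_pi_div_three : cos (2 * π / 3) = -(1 / 2) := by
  rw [show 2 * π / 3 = π - π / 3 by ring, cos_pi_sub, cos_pi_div_three]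

theorem sin_two_pi_div_three_pos : 0 < sin (2 * π / 3) :=
  sin_pos_of_pos_of_lt_pi (by positivity) (by linarith [pi_pos])

theorem sin_eq_zero_iff_of_mem_Ioc {t : ℝ} (ht : t ∈ Set.Ioc (-π) π) :
    sin t = 0 ↔ t = 0 ∨ t = π := by
  rcases ht.2.lt_or_eq with hlt | rfl
  · simp [sin_eq_zero_iff_of_lt_of_lt ht.1 hlt, hlt.ne]
  · simp [pi_ne_zero]

/-- Since `cos |t| = cos t` and `|t| ∈ [0, π]`, injectivity of `cos` on `[0, π]` pins down `|t|`. -/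
theorem cos_eq_neg_half_iff_of_mem_Ioc {t : ℝ} (ht : t ∈ Set.Ioc (-π) π) :
    cos t = -(1 / 2) ↔ t = 2 * π / 3 ∨ t = -(2 * π / 3) := by
  constructor
  · intro h
    have habs : |t| = 2 * π / 3 := by
      refine injOn_cos ⟨abs_nonneg t, abs_le.2 ⟨ht.1.le, ht.2⟩⟩
        ⟨by positivity, by linarith [pi_pos]⟩ ?_
      rw [cos_abs, h, cos_two_pi_div_three]
    exact abs_eq (by positivity) |>.1 habs
  · rintro (rfl | rfl) <;> simp [cos_two_pi_div_three]

end Real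

open Real

theorem symbF_critical_iff (a b : ℝ) :
    (sin a + sin (a - b) = 0 ∧ sin b - sin (a - b) = 0) ↔
      (sin a = 0 ∧ sin b = 0) ∨ (cos a = -(1 / 2) ∧ cos b = -(1 / 2) ∧ sin b = -sin a) := by
  rw [sin_sub]
  constructor
  · rintro ⟨h₁, h₂⟩
    have hsb : sin b = -sin a := by linarith
    by_cases hsa : sin a = 0
    · exact .inl ⟨hsa, by rw [hsb, hsa, neg_zero]⟩
    have hsum : cos a + cos b = -1 := by
      have : sin a * (1 + cos a + cos b) = 0 := by rw [hsb] at h₁; linear_combination h₁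
      linarith [(mul_eq_zero.1 this).resolve_left hsa]
    have hsq : (cos a - cos b) * (cos a + cos b) = 0 := by
      linear_combination sin_sq_add_cos_sq a - sin_sq_add_cos_sq b + (sin b - sin a) * hsb
    have hdiff : cos a - cos b = 0 := (mul_eq_zero.1 hsq).resolve_right (by linarith)
    exact .inr ⟨by linarith, by linarith, hsb⟩
  · rintro (⟨ha, hb⟩ | ⟨ha, hb, hsb⟩)
    · simp [ha, hb]
    · rw [ha, hb, hsb]
      constructor <;> ring

/-- For `x ∈ (-π,π]²`, the gradient of `F` vanishes at `x` iff `x` belongs to the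
six-element set `{(π,π), (0,π), (0,0), (π,0), (2π/3,-2π/3), (-2π/3,2π/3)}`. -/
theorem critical_points_symbF (x : ℝ × ℝ)
    (hx1 : x.1 ∈ Set.Ioc (-Real.pi) Real.pi) (hx2 : x.2 ∈ Set.Ioc (-Real.pi) Real.pi) :
    (Real.sin x.1 + Real.sin (x.1 - x.2) = 0 ∧ Real.sin x.2 - Real.sin (x.1 - x.2) = 0) ↔
      x ∈ ({(Real.pi, Real.pi), (0, Real.pi), (0, 0), (Real.pi, 0),
            (2 * Real.pi / 3, -(2 * Real.pi / 3)),
            (-(2 * Real.pi / 3), 2 * Real.pi / 3)} : Set (ℝ × ℝ)) := by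
  obtain ⟨a, b⟩ := x
  have hsin := sin_two_pi_div_three_pos
  rw [symbF_critical_iff, sin_eq_zero_iff_of_mem_Ioc hx1, sin_eq_zero_iff_of_mem_Ioc hx2,
    cos_eq_neg_half_iff_of_mem_Ioc hx1, cos_eq_neg_half_iff_of_mem_Ioc hx2]
  simp only [Set.mem_insert_iff, Set.mem_singleton_iff, Prod.mk.injEq]
  constructor
  · rintro (⟨ha | ha, hb | hb⟩ | ⟨ha | ha, hb | hb, hsb⟩) <;> subst ha hb
    all_goals first | linarith [sin_neg (2 * π / 3)] | simp
  · rintro (⟨rfl, rfl⟩ | ⟨rfl, rfl⟩ | ⟨rfl, rfl⟩ | ⟨rfl, rfl⟩ | ⟨rfl, rfl⟩ | ⟨rfl, rfl⟩) <;> simp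
end
end

section
/- If x ∈ ℝ² is a critical point of F, i.e. ∂₁F(x) = 0 and ∂₂F(x) = 0, then F(x) ∈ {1, −1/3, −1/2}. -/
open scoped ENNReal
open Filter

noncomputable section

/-! With `α = x₁`, `β = -x₂`, `γ = x₂ - x₁`, which sum to zero, `x` is critical exactly when
`sin α = sin β = sin γ`. Expanding `sin γ = -sin (α + β)` gives `sin γ * (1 + cos α + cos β) = 0`,
and likewise for the cyclic permutations. So either the common sine vanishes, all cosines are `±1`
and `cos γ = cos α * cos β`, or any two cosines sum to `-1` and all three equal `-1/2`. -/

namespace Real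

variable {α β γ : ℝ}

theorem sin_mul_one_add_cos_add_cos_eq_zero (hsum : α + β + γ = 0) (hαβ : sin α = sin β)
    (hβγ : sin β = sin γ) : sin γ * (1 + cos α + cos β) = 0 := by
  have h : sin γ = -(sin α * cos β + cos α * sin β) := by
    rw [← sin_add, ← sin_neg, show γ = -(α + β) by linarith]
  rw [hαβ, hβγ] at h
  linear_combination h

theorem cos_eq_mul_cos_of_sin_eq_zero (hsum : α + β + γ = 0) (hα : sin α = 0) :
    cos γ = cos α * cos β := by
  rw [show γ = -(α + β) by linarith, cos_neg, cos_add, hα, zero_mul, sub_zero]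

theorem cos_add_cos_add_cos_mem_of_sin_eq (hsum : α + β + γ = 0) (hαβ : sin α = sin β)
    (hβγ : sin β = sin γ) : cos α + cos β + cos γ ∈ ({3, -1, -(3/2)} : Set ℝ) := by
  simp only [Set.mem_insert_iff, Set.mem_singleton_iff]
  rcases eq_or_ne (sin γ) 0 with hγ | hγ
  · have hα₀ : sin α = 0 := (hαβ.trans hβγ).trans hγ
    have hγ_mul := cos_eq_mul_cos_of_sin_eq_zero hsum hα₀
    rcases sin_eq_zero_iff_cos_eq.mp hα₀ with hα | hα <;>
      rcases sin_eq_zero_iff_cos_eq.mp (hβγ.trans hγ) with hβ | hβ <;>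
      · rw [hγ_mul, hα, hβ]; norm_num
  · have hα : sin α = sin γ := hαβ.trans hβγ
    have h₁ := sin_mul_one_add_cos_add_cos_eq_zero hsum hαβ hβγ
    have h₂ := sin_mul_one_add_cos_add_cos_eq_zero (α := β) (β := γ) (γ := α) (by linarith)
      hβγ hα.symm
    have h₃ := sin_mul_one_add_cos_add_cos_eq_zero (α := γ) (β := α) (γ := β) (by linarith)
      hα.symm hαβ
    rw [hα] at h₂
    rw [hβγ] at h₃
    have e₁ := (mul_eq_zero.mp h₁).resolve_left hγ
    have e₂ := (mul_eq_zero.mp h₂).resolve_left hγ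
    have e₃ := (mul_eq_zero.mp h₃).resolve_left hγ
    right; right
    linarith

end Real

/-- At any critical point of `F`, the value of `F` lies in `{1, -1/3, -1/2}`. -/
theorem symbF_value_at_critical_points (x : ℝ × ℝ) (h1 : d1F x = 0) (h2 : d2F x = 0) :
    symbF x ∈ ({1, -(1/3), -(1/2)} : Set ℝ) := by
  have hsin₁ : Real.sin x.1 = Real.sin (-x.2) := by
    simp only [d1F, d2F] at h1 h2
    rw [Real.sin_neg]
    linear_combination -3 * h1 - 3 * h2
  have hsin₂ : Real.sin (-x.2) = Real.sin (x.2 - x.1) := by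
    simp only [d2F] at h2
    rw [Real.sin_neg, ← neg_sub, Real.sin_neg]
    linear_combination 3 * h2
  have hmem := Real.cos_add_cos_add_cos_mem_of_sin_eq (by ring) hsin₁ hsin₂
  rw [Real.cos_neg, ← neg_sub, Real.cos_neg] at hmem
  have hF : symbF x = (1/3) * (Real.cos x.1 + Real.cos x.2 + Real.cos (x.1 - x.2)) := rfl
  simp only [Set.mem_insert_iff, Set.mem_singleton_iff] at hmem ⊢
  rcases hmem with h | h | h <;> rw [hF, h] <;> norm_num
end
end

section
/- For all real numbers a ≤ b with [a,b] ⊆ [−1/2,1] and [a,b] ∩ {−1/2, −1/3, 1} = ∅, there exists c > 0 such that for every x ∈ ℝ² with F(x) ∈ [a,b] one has (∂₁F(x))² + (∂₂F(x))² ≥ c. (This is the key positivity underlying the Mourre estimate for Δ_T.) -/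
open scoped ENNReal
open Filter

noncomputable section

private lemma crit (x : ℝ × ℝ) (h1 : d1F x = 0) (h2 : d2F x = 0) :
    symbF x = 1 ∨ symbF x = -(1/3) ∨ symbF x = -(1/2) := by
  obtain ⟨x1, x2⟩ := x
  simp only [d1F, d2F, symbF] at *
  have hu : Real.sin (x1 - x2) = Real.sin x1 * Real.cos x2 - Real.cos x1 * Real.sin x2 :=
    Real.sin_sub x1 x2
  have hc : Real.cos (x1 - x2) = Real.cos x1 * Real.cos x2 + Real.sin x1 * Real.sin x2 :=
    Real.cos_sub x1 x2
  have p1 : Real.sin x1 ^ 2 + Real.cos x1 ^ 2 = 1 := Real.sin_sq_add_cos_sq x1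
  have p2 : Real.sin x2 ^ 2 + Real.cos x2 ^ 2 = 1 := Real.sin_sq_add_cos_sq x2
  set s := Real.sin x1 with hsd
  set t := Real.sin x2 with htd
  set c1 := Real.cos x1 with hc1d
  set c2 := Real.cos x2 with hc2d
  set u := Real.sin (x1 - x2) with hud
  set v := Real.cos (x1 - x2) with hvd
  clear_value s t c1 c2 u v
  clear hsd htd hc1d hc2d hud hvd
  have hs : s = -u := by linarith
  have ht : t = u := by linarith
  simp only [hs, ht] at hu p1 p2 hc
  have key : u * (1 + c1 + c2) = 0 := by linear_combination hu
  rcases mul_eq_zero.mp key with h0 | h0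
  · rw [h0] at hc p1 p2
    have hc1sq : (c1 - 1) * (c1 + 1) = 0 := by nlinarith
    have hc2sq : (c2 - 1) * (c2 + 1) = 0 := by nlinarith
    rcases mul_eq_zero.mp hc1sq with h | h <;> rcases mul_eq_zero.mp hc2sq with h' | h' <;>
      [left; (right; left); (right; left); (right; left)] <;> nlinarith
  · have hc1v : c1 = -(1/2) := by nlinarith
    have hc2v : c2 = -(1/2) := by linarith
    rw [hc1v] at p1
    right; right
    rw [hc, hc1v, hc2v]
    nlinarith [p1]

private lemma reduce_aux (z : ℝ) : ∃ y ∈ Set.Icc (-Real.pi) Real.pi, ∃ k : ℤ, z = y + k * (2 * Real.pi) := by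
  have hp : (0:ℝ) < 2 * Real.pi := by positivity
  refine ⟨toIocMod hp (-Real.pi) z, ?_, toIocDiv hp (-Real.pi) z, ?_⟩
  · have h := toIocMod_mem_Ioc hp (-Real.pi) z
    constructor
    · exact le_of_lt h.1
    · have := h.2; linarith
  · have := toIocMod_add_toIocDiv_zsmul hp (-Real.pi) z
    rw [zsmul_eq_mul] at this
    linarith

lemma reduce (x : ℝ × ℝ) : ∃ y : ℝ × ℝ, y ∈ Set.Icc ((-Real.pi, -Real.pi) : ℝ × ℝ) (Real.pi, Real.pi) ∧
    symbF y = symbF x ∧ d1F y = d1F x ∧ d2F y = d2F x := by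
  obtain ⟨y1, hy1, k1, hk1⟩ := reduce_aux x.1
  obtain ⟨y2, hy2, k2, hk2⟩ := reduce_aux x.2
  refine ⟨(y1, y2), ⟨⟨hy1.1, hy2.1⟩, ⟨hy1.2, hy2.2⟩⟩, ?_⟩
  have hd : x.1 - x.2 = (y1 - y2) + ((k1 - k2 : ℤ) : ℝ) * (2 * Real.pi) := by push_cast; linarith
  have hc1 : Real.cos x.1 = Real.cos y1 := by rw [hk1, Real.cos_add_int_mul_two_pi]
  have hc2 : Real.cos x.2 = Real.cos y2 := by rw [hk2, Real.cos_add_int_mul_two_pi]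
  have hcd : Real.cos (x.1 - x.2) = Real.cos (y1 - y2) := by rw [hd, Real.cos_add_int_mul_two_pi]
  have hs1 : Real.sin x.1 = Real.sin y1 := by rw [hk1, Real.sin_add_int_mul_two_pi]
  have hs2 : Real.sin x.2 = Real.sin y2 := by rw [hk2, Real.sin_add_int_mul_two_pi]
  have hsd : Real.sin (x.1 - x.2) = Real.sin (y1 - y2) := by rw [hd, Real.sin_add_int_mul_two_pi]
  simp only [symbF, d1F, d2F, hc1, hc2, hcd, hs1, hs2, hsd]
  tauto

/-- Strict positivity of `‖∇F‖²` on energy windows avoiding the critical values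
`{-1/2, -1/3, 1}` (key positivity behind the Mourre estimate for `Δ_T`). -/
theorem gradient_symbF_positive_away_from_thresholds (a b : ℝ) (hab : a ≤ b)
    (hsub : Set.Icc a b ⊆ Set.Icc (-(1/2) : ℝ) 1)
    (hdisj : Set.Icc a b ∩ ({-(1/2), -(1/3), 1} : Set ℝ) = ∅) :
    ∃ c > 0, ∀ x : ℝ × ℝ, symbF x ∈ Set.Icc a b → c ≤ d1F x ^ 2 + d2F x ^ 2 := by
  have hF : Continuous symbF := by unfold symbF; fun_prop
  have hg : Continuous (fun x : ℝ × ℝ => d1F x ^ 2 + d2F x ^ 2) := by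
    unfold d1F d2F; fun_prop
  set K : Set (ℝ × ℝ) :=
    Set.Icc ((-Real.pi, -Real.pi) : ℝ × ℝ) (Real.pi, Real.pi) ∩ symbF ⁻¹' (Set.Icc a b) with hKdef
  have hKc : IsCompact K := isCompact_Icc.inter_right (isClosed_Icc.preimage hF)
  have hnotin : ∀ z : ℝ × ℝ, symbF z ∈ Set.Icc a b → ¬(d1F z = 0 ∧ d2F z = 0) := by
    rintro z hz ⟨h1, h2⟩
    have hmem : symbF z ∈ Set.Icc a b ∩ ({-(1/2), -(1/3), 1} : Set ℝ) := by
      refine ⟨hz, ?_⟩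
      rcases crit z h1 h2 with h | h | h <;> simp [h]
    rw [hdisj] at hmem
    exact hmem
  rcases K.eq_empty_or_nonempty with hK | hK
  · refine ⟨1, one_pos, fun x hx => ?_⟩
    obtain ⟨y, hy, hFy, _, _⟩ := reduce x
    exfalso
    have : y ∈ K := ⟨hy, by simpa [hFy] using hx⟩
    rw [hK] at this
    exact this
  · obtain ⟨x0, hx0K, hmin⟩ := hKc.exists_isMinOn hK hg.continuousOn
    have hx0F : symbF x0 ∈ Set.Icc a b := hx0K.2
    have hpos : 0 < d1F x0 ^ 2 + d2F x0 ^ 2 := by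
      rcases (lt_or_eq_of_le (by positivity : (0:ℝ) ≤ d1F x0 ^ 2 + d2F x0 ^ 2)) with h | h
      · exact h
      · exfalso
        apply hnotin x0 hx0F
        constructor <;> [skip; skip] <;>
          · nlinarith [sq_nonneg (d1F x0), sq_nonneg (d2F x0)]
    refine ⟨_, hpos, fun x hx => ?_⟩
    obtain ⟨y, hy, hFy, h1y, h2y⟩ := reduce x
    have hyK : y ∈ K := ⟨hy, by simpa [hFy] using hx⟩
    have := hmin hyK
    simp only [Set.mem_setOf_eq] at this
    calc d1F x0 ^ 2 + d2F x0 ^ 2 ≤ d1F y ^ 2 + d2F y ^ 2 := this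
      _ = d1F x ^ 2 + d2F x ^ 2 := by rw [h1y, h2y]
end
end

section
/- There exists a constant C > 0 such that for every finitely supported function f : ℤ² → ℂ one has Σ_{n∈ℤ²} |(A f)(n)|² ≤ C · Σ_{n∈ℤ²} Λ(n)² |f(n)|², i.e. ‖A f‖_{ℓ²} ≤ √C · ‖Λ f‖_{ℓ²}. (This is the key bound in the Nelson-lemma proof that A is essentially self-adjoint.) -/
open scoped ENNReal
open Filter

noncomputable section

/-!
`A` is a six-point stencil whose coefficients grow linearly in `n`. By Cauchy–Schwarz,
`|A f (n)|² ≤ (1/6) Σᵢ cᵢ(n)² |f(n + eᵢ)|²`; translating the `i`-th sum by `eᵢ` turns its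
coefficient into `cᵢ(m - eᵢ)`, which is bounded by `|m₁| + |m₂| + 1 ≤ 2 Λ(m)`. Hence `C = 4`.
-/
lemma summable_mul_of_support_finite {G : Type*} {g : G → ℝ} (hg : (Function.support g).Finite)
    (v : G → ℝ) : Summable fun n => v n * g n :=
  summable_of_hasFiniteSupport (hg.subset (Function.support_mul_subset_right v g))

lemma tsum_mul_comp_add_right_le {G : Type*} [AddGroup G] {g : G → ℝ}
    (hg : (Function.support g).Finite) (hg0 : 0 ≤ g) {v w : G → ℝ} (e : G)
    (hvw : ∀ m, v (m - e) ≤ w m) :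
    ∑' n, v n * g (n + e) ≤ ∑' m, w m * g m := by
  have hshift : ∑' n, v n * g (n + e) = ∑' m, v (m - e) * g m := by
    simpa using (Equiv.addRight e).tsum_eq fun m => v (m - e) * g m
  rw [hshift]
  exact (summable_mul_of_support_finite hg _).tsum_le_tsum
    (fun m => mul_le_mul_of_nonneg_right (hvw m) (hg0 m)) (summable_mul_of_support_finite hg _)

lemma norm_sum_sq_le_card_mul {ι E : Type*} [SeminormedAddCommGroup E] (s : Finset ι) (z : ι → E) :
    ‖∑ i ∈ s, z i‖ ^ 2 ≤ s.card * ∑ i ∈ s, ‖z i‖ ^ 2 :=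
  (pow_le_pow_left₀ (norm_nonneg _) (norm_sum_le s z) 2).trans sq_sum_le_card_mul_sum_sq

lemma abs_le_jap (t : ℝ) : |t| ≤ jap t :=
  Real.abs_le_sqrt (by linarith)

lemma half_le_jap (t : ℝ) : 1 / 2 ≤ jap t :=
  (Real.le_sqrt (by norm_num) (by positivity)).2 (by nlinarith)

lemma abs_add_abs_add_one_le_two_mul_Lam (m : ℤ × ℤ) :
    |(m.1 : ℝ)| + |(m.2 : ℝ)| + 1 ≤ 2 * Lam m := by
  have := abs_le_jap m.1
  have := abs_le_jap m.2
  have := half_le_jap m.1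
  have := half_le_jap m.2
  rw [Lam]
  linarith

def shiftA : Fin 6 → ℤ × ℤ := ![(1, 0), (-1, 0), (0, 1), (0, -1), (-1, 1), (1, -1)]

def coeffA : Fin 6 → ℤ × ℤ → ℝ :=
  ![fun n => n.1 + 1 / 2, fun n => 1 / 2 - n.1, fun n => n.2 + 1 / 2, fun n => 1 / 2 - n.2,
    fun n => n.2 - n.1 + 1, fun n => n.1 - n.2 + 1]

lemma opA_eq_sum (f : ℤ × ℤ → ℂ) (n : ℤ × ℤ) :
    opA f n = Complex.I / 6 * ∑ i, (coeffA i n : ℂ) * f (n + shiftA i) := by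
  obtain ⟨p, q⟩ := n
  simp only [opA, Fin.sum_univ_six, coeffA, shiftA, Prod.mk_add_mk, ← sub_eq_add_neg, add_zero,
    Matrix.cons_val]
  push_cast
  ring

lemma abs_coeffA_sub_shiftA_le (i : Fin 6) (m : ℤ × ℤ) :
    |coeffA i (m - shiftA i)| ≤ |(m.1 : ℝ)| + |(m.2 : ℝ)| + 1 := by
  have h1 := abs_nonneg (m.1 : ℝ)
  have h2 := abs_nonneg (m.2 : ℝ)
  rw [abs_le]
  fin_cases i <;>
    simp only [coeffA, shiftA, Fin.zero_eta, Fin.mk_one, Fin.reduceFinMk, Matrix.cons_val,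
      Prod.fst_sub, Prod.snd_sub, Int.cast_sub, Int.cast_one, Int.cast_neg] <;>
    constructor <;>
    linarith [le_abs_self (m.1 : ℝ), neg_abs_le (m.1 : ℝ), le_abs_self (m.2 : ℝ),
      neg_abs_le (m.2 : ℝ)]

lemma coeffA_sub_shiftA_sq_le (i : Fin 6) (m : ℤ × ℤ) :
    coeffA i (m - shiftA i) ^ 2 ≤ 4 * Lam m ^ 2 := by
  have h := (abs_coeffA_sub_shiftA_le i m).trans (abs_add_abs_add_one_le_two_mul_Lam m)
  calc coeffA i (m - shiftA i) ^ 2 = |coeffA i (m - shiftA i)| ^ 2 := (sq_abs _).symm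
    _ ≤ (2 * Lam m) ^ 2 := pow_le_pow_left₀ (abs_nonneg _) h 2
    _ = 4 * Lam m ^ 2 := by ring

lemma norm_opA_sq_le (f : ℤ × ℤ → ℂ) (n : ℤ × ℤ) :
    ‖opA f n‖ ^ 2 ≤ 1 / 6 * ∑ i, coeffA i n ^ 2 * ‖f (n + shiftA i)‖ ^ 2 := by
  have hI : ‖Complex.I / 6‖ = 1 / 6 := by simp
  have hterm (i : Fin 6) : ‖(coeffA i n : ℂ) * f (n + shiftA i)‖ ^ 2
      = coeffA i n ^ 2 * ‖f (n + shiftA i)‖ ^ 2 := by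
    rw [norm_mul, Complex.norm_real, Real.norm_eq_abs, mul_pow, sq_abs]
  calc ‖opA f n‖ ^ 2
      = 1 / 36 * ‖∑ i, (coeffA i n : ℂ) * f (n + shiftA i)‖ ^ 2 := by
        rw [opA_eq_sum, norm_mul, hI]; ring
    _ ≤ 1 / 36 * (6 * ∑ i, coeffA i n ^ 2 * ‖f (n + shiftA i)‖ ^ 2) := by
        gcongr
        simpa only [hterm, Finset.card_univ, Fintype.card_fin, Nat.cast_ofNat]
          using norm_sum_sq_le_card_mul Finset.univ fun i => (coeffA i n : ℂ) * f (n + shiftA i)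
    _ = 1 / 6 * ∑ i, coeffA i n ^ 2 * ‖f (n + shiftA i)‖ ^ 2 := by ring

/-- the Nelson-lemma bound `‖A f‖ ≤ √C ‖Λ f‖` on finitely supported functions. -/
theorem opA_bounded_by_weight :
    ∃ C > 0, ∀ f : ℤ × ℤ → ℂ, (Function.support f).Finite →
      ∑' n : ℤ × ℤ, ‖opA f n‖ ^ 2 ≤ C * ∑' n : ℤ × ℤ, Lam n ^ 2 * ‖f n‖ ^ 2 := by
  refine ⟨4, by norm_num, fun f hf => ?_⟩
  have hg : (Function.support fun m => ‖f m‖ ^ 2).Finite :=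
    hf.subset fun m hm => by simpa using hm
  have hsum (i : Fin 6) : Summable fun n => coeffA i n ^ 2 * ‖f (n + shiftA i)‖ ^ 2 :=
    summable_mul_of_support_finite (hg.preimage (add_left_injective _).injOn) _
  have hbound : Summable fun n => 1 / 6 * ∑ i, coeffA i n ^ 2 * ‖f (n + shiftA i)‖ ^ 2 :=
    (summable_sum fun i _ => hsum i).mul_left _
  calc ∑' n, ‖opA f n‖ ^ 2
      ≤ ∑' n, 1 / 6 * ∑ i, coeffA i n ^ 2 * ‖f (n + shiftA i)‖ ^ 2 :=
        (hbound.of_nonneg_of_le (fun _ => sq_nonneg _) (norm_opA_sq_le f)).tsum_le_tsum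
          (norm_opA_sq_le f) hbound
    _ = 1 / 6 * ∑ i, ∑' n, coeffA i n ^ 2 * ‖f (n + shiftA i)‖ ^ 2 := by
        rw [tsum_mul_left, Summable.tsum_finsetSum fun i _ => hsum i]
    _ ≤ 1 / 6 * ∑ _i : Fin 6, ∑' m, 4 * Lam m ^ 2 * ‖f m‖ ^ 2 := by
        gcongr 1 / 6 * ?_
        exact Finset.sum_le_sum fun i _ => tsum_mul_comp_add_right_le hg (fun _ => sq_nonneg _)
          (v := fun n => coeffA i n ^ 2) (shiftA i) (coeffA_sub_shiftA_sq_le i)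
    _ = 4 * ∑' m, Lam m ^ 2 * ‖f m‖ ^ 2 := by
        simp only [mul_assoc, tsum_mul_left, Finset.sum_const, Finset.card_univ, Fintype.card_fin]
        ring
end
end

section
/- Let η : ℤ² → ℝ satisfy (H₀): inf_n η(n) > −1 and η(n) → 0 as |n| → ∞, and set m := 1 + η. Then any bounded operator D on ℓ²(ℤ²,ℂ) satisfying (D f)(n) = (Δ_T f)(n) − (Δ̃ f)(n) for all f ∈ ℓ²(ℤ²,ℂ) and all n ∈ ℤ² is a compact operator. -/
open scoped ENNReal
open Filter

noncomputable section

open Topology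

/-! Writing `W` for multiplication by `m^{-1/2}`, the perturbed Laplacian is `Δ̃ = W Δ_T W`, hence
`Δ_T - Δ̃ = Δ_T (1 - W) + (1 - W) Δ_T W`. Because `η → 0`, the multiplier `1 - m^{-1/2}` vanishes at
infinity, so `1 - W` is the operator-norm limit of finite-rank multiplication operators and is
compact; compact operators form an ideal. -/

theorem Memℓp.comp_injective {α β E : Type*} [NormedAddCommGroup E] {p : ℝ≥0∞} {f : α → E}
    (hf : Memℓp f p) {g : β → α} (hg : Function.Injective g) : Memℓp (f ∘ g) p := by
  rcases p.trichotomy with rfl | rfl | hp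
  · exact memℓp_zero (hf.finite_dsupport.preimage hg.injOn)
  · exact memℓp_infty (hf.bddAbove.mono (Set.range_comp_subset_range g fun i => ‖f i‖))
  · exact memℓp_gen ((hf.summable hp).comp_injective hg)

namespace lp

variable {α β 𝕜 E : Type*} [NormedField 𝕜] [NormedAddCommGroup E] [NormedSpace 𝕜 E]
  {p : ℝ≥0∞} [Fact (1 ≤ p)]

variable (𝕜 E p) in
def funLeftCLM (g : β ↪ α) : lp (fun _ : α => E) p →L[𝕜] lp (fun _ : β => E) p :=
  LinearMap.mkContinuous
    { toFun f := ⟨f ∘ g, (lp.memℓp f).comp_injective g.injective⟩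
      map_add' _ _ := rfl
      map_smul' _ _ := rfl }
    1 fun f => by
      rw [one_mul]
      rcases eq_or_ne p ∞ with rfl | hp
      · exact norm_le_of_forall_le (norm_nonneg f) fun i => norm_apply_le_norm (by simp) f (g i)
      · have hp' : 0 < p.toReal := ENNReal.toReal_pos (zero_lt_one.trans_le Fact.out).ne' hp
        refine norm_le_of_forall_sum_le hp' (norm_nonneg f) fun s => ?_
        exact (Finset.sum_map s g fun i => ‖f i‖ ^ p.toReal).symm.le.trans
          (sum_rpow_le_norm_rpow hp' f _)

@[simp]
theorem funLeftCLM_apply (g : β ↪ α) (f : lp (fun _ : α => E) p) (i : β) :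
    funLeftCLM 𝕜 E p g f i = f (g i) :=
  rfl

theorem tendsto_sum_single_of_tendsto_cofinite {α : Type*} {E : α → Type*}
    [∀ i, NormedAddCommGroup (E i)] [DecidableEq α] (w : lp E ∞)
    (hw : Tendsto (fun i => ‖w i‖) cofinite (𝓝 0)) :
    Tendsto (fun s : Finset α => ∑ i ∈ s, lp.single ∞ i (w i)) atTop (𝓝 w) := by
  rw [Metric.tendsto_atTop]
  intro ε hε
  have hfin : {i | ¬ ‖w i‖ < ε / 2}.Finite :=
    eventually_cofinite.1 (hw.eventually (gt_mem_nhds (half_pos hε)))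
  refine ⟨hfin.toFinset, fun s hs => ?_⟩
  rw [dist_eq_norm]
  refine (norm_le_of_forall_le (half_pos hε).le fun j => ?_).trans_lt (half_lt_self hε)
  simp only [coeFn_sub, coeFn_sum, lp.coeFn_single, Pi.sub_apply, Finset.sum_apply,
    Finset.sum_pi_single]
  by_cases hj : j ∈ s
  · simpa [hj] using (half_pos hε).le
  · have : ‖w j‖ < ε / 2 := by_contra fun h => hj (hs (hfin.mem_toFinset.2 h))
    simpa [hj] using this.le

section Multiplication

variable {α 𝕜 : Type*} [RCLike 𝕜] {p : ℝ≥0∞} [Fact (1 ≤ p)]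

variable (𝕜 p) in
def pointwiseMulL :
    ℓ^∞(α, 𝕜) →L[𝕜] lp (fun _ : α => 𝕜) p →L[𝕜] lp (fun _ : α => 𝕜) p :=
  holderL p (fun _ => ContinuousLinearMap.mul 𝕜 𝕜) (K := 1)
    fun _ => ContinuousLinearMap.opNorm_mul_le 𝕜 𝕜

@[simp]
theorem pointwiseMulL_apply (w : ℓ^∞(α, 𝕜)) (f : lp (fun _ : α => 𝕜) p) (i : α) :
    pointwiseMulL 𝕜 p w f i = w i * f i :=
  rfl

@[simp]
theorem pointwiseMulL_one : pointwiseMulL 𝕜 p (1 : ℓ^∞(α, 𝕜)) = 1 := by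
  ext f i
  simp [infty_coeFn_one]

theorem isCompactOperator_pointwiseMulL_single [DecidableEq α] (i : α) (a : 𝕜) :
    IsCompactOperator (pointwiseMulL 𝕜 p (lp.single ∞ i a)) := by
  have h : pointwiseMulL 𝕜 p (lp.single ∞ i a) =
      (singleContinuousLinearMap 𝕜 (fun _ : α => 𝕜) p i).comp (a • evalCLM 𝕜 _ p i) := by
    ext f j
    rcases eq_or_ne j i with rfl | hj
    · simp [evalCLM]
    · simp [hj]
  rw [h, ContinuousLinearMap.coe_comp]
  exact (isCompactOperator_of_locallyCompactSpace_dom _).clm_comp _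

theorem isCompactOperator_pointwiseMulL (w : ℓ^∞(α, 𝕜)) (hw : Tendsto (⇑w) cofinite (𝓝 0)) :
    IsCompactOperator (pointwiseMulL 𝕜 p w) := by
  classical
  refine isCompactOperator_of_tendsto
    (((pointwiseMulL 𝕜 p).continuous.tendsto w).comp
      (tendsto_sum_single_of_tendsto_cofinite w (tendsto_norm_zero.comp hw)))
    (Eventually.of_forall fun s => ?_)
  simp only [Function.comp_apply, map_sum]
  exact Finset.sum_induction _ (fun T : lp (fun _ : α => 𝕜) p →L[𝕜] _ => IsCompactOperator T)
    (fun _ _ hS hT => hS.add hT) isCompactOperator_zero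
    fun i _ => isCompactOperator_pointwiseMulL_single i (w i)

end Multiplication

end lp

namespace TriangularLattice

def shift (v : ℤ × ℤ) : H2 →L[ℂ] H2 :=
  lp.funLeftCLM ℂ ℂ 2 (Equiv.addRight v).toEmbedding

@[simp]
theorem shift_apply (v : ℤ × ℤ) (f : H2) (n : ℤ × ℤ) : shift v f n = f (n + v) :=
  rfl

def lapTCLM : H2 →L[ℂ] H2 :=
  (6 : ℂ)⁻¹ • (shift (1, 0) + shift (-1, 0) + shift (0, 1) + shift (0, -1)
    + shift (1, -1) + shift (-1, 1))

theorem lapTCLM_apply (f : H2) (n : ℤ × ℤ) : lapTCLM f n = lapT (⇑f) n := by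
  obtain ⟨a, b⟩ := n
  simp only [lapTCLM, lapT, smul_apply, add_apply,
    lp.coeFn_smul, lp.coeFn_add, Pi.add_apply, Pi.smul_apply, shift_apply, Prod.mk_add_mk,
    smul_eq_mul, add_zero, ← sub_eq_add_neg]
  ring

theorem lapPert_eq_mul_lapT_mul (m : ℤ × ℤ → ℝ) (f : ℤ × ℤ → ℂ) (n : ℤ × ℤ) :
    lapPert m f n = (√(m n) : ℂ)⁻¹ * lapT (fun l => (√(m l) : ℂ)⁻¹ * f l) n := by
  simp only [lapPert, lapT]
  push_cast
  ring

end TriangularLattice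

open TriangularLattice in
theorem lapT_sub_lapPert_compact_general (η : ℤ × ℤ → ℝ)
    (h0lim : Filter.Tendsto η Filter.cofinite (nhds 0))
    (D : H2 →L[ℂ] H2)
    (hD : ∀ (f : H2) (n : ℤ × ℤ),
      D f n = lapT (⇑f) n - lapPert (fun k => 1 + η k) (⇑f) n) :
    IsCompactOperator (⇑D) := by
  have hw : Tendsto (fun n => (√(1 + η n) : ℂ)⁻¹) cofinite (𝓝 1) := by
    have hc : ContinuousAt (fun t : ℝ => (√(1 + t) : ℂ)⁻¹) 0 := by
      fun_prop (disch := simp)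
    simpa [Function.comp_def] using hc.tendsto.comp h0lim
  set W := lp.pointwiseMulL ℂ 2
    (⟨_, memℓp_infty hw.norm.bddAbove_range_of_cofinite⟩ : lp (fun _ : ℤ × ℤ => ℂ) ∞) with hW
  have hK : IsCompactOperator ⇑(1 - W) := by
    rw [hW, ← lp.pointwiseMulL_one, ← map_sub]
    refine lp.isCompactOperator_pointwiseMulL _ ?_
    change Tendsto (fun n => 1 - (√(1 + η n) : ℂ)⁻¹) cofinite (𝓝 0)
    simpa using (tendsto_const_nhds (x := (1 : ℂ))).sub hw
  have hDW : D = lapTCLM - W * lapTCLM * W := by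
    ext f n
    rw [hD, sub_apply, lp.coeFn_sub, Pi.sub_apply, lapTCLM_apply, lapPert_eq_mul_lapT_mul]
    simp only [hW, mul_apply_eq_comp, lp.pointwiseMulL_apply, lapTCLM_apply]
    rfl
  have hsplit : D = lapTCLM * (1 - W) + (1 - W) * (lapTCLM * W) := by
    rw [hDW]
    noncomm_ring
  rw [hsplit]
  exact (hK.clm_comp lapTCLM).add (hK.comp_clm (lapTCLM * W))

/-- under `(H₀)`, the difference `Δ_T - Δ̃` is a compact operator on `ℓ²(ℤ²,ℂ)`. -/
theorem lapT_sub_lapPert_compact (η : ℤ × ℤ → ℝ)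
    (h0inf : ∃ c : ℝ, -1 < c ∧ ∀ n : ℤ × ℤ, c ≤ η n)
    (h0lim : Filter.Tendsto η Filter.cofinite (nhds 0))
    (D : H2 →L[ℂ] H2)
    (hD : ∀ (f : H2) (n : ℤ × ℤ),
      D f n = lapT (⇑f) n - lapPert (fun k => 1 + η k) (⇑f) n) :
    IsCompactOperator (⇑D) :=
  lapT_sub_lapPert_compact_general η h0lim D hD
end
end

section
/- Let ε > 0 and let V : ℤ² → ℝ be bounded and satisfy (H'₁): sup_{n∈ℤ²} Λ(n)^ε ⟨n₁⟩ |V(n₁,n₂) − V(n₁+1,n₂)| < ∞, (H'₂): sup_{n∈ℤ²} Λ(n)^ε ⟨n₂⟩ |V(n₁,n₂) − V(n₁,n₂+1)| < ∞, and (H'₃): sup_{n∈ℤ²} Λ(n)^ε ⟨n₁−n₂⟩ |V(n₁,n₂) − V(n₁+1,n₂−1)| < ∞. Then there exists c > 0 such that for every finitely supported f : ℤ² → ℂ, Σ_{n∈ℤ²} Λ(n)^{2ε} |V(n)·(A f)(n) − (A(V·f))(n)|² ≤ c · Σ_{n∈ℤ²} |f(n)|²; i.e., Λ^{ε}(Q)[V(Q),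 A] extends to a bounded operator on ℓ²(ℤ²,ℂ). -/
open scoped ENNReal
open Filter

noncomputable section

/-! Auxiliary lemmas -/

private lemma jap_pos' (t : ℝ) : 0 < jap t := Real.sqrt_pos.2 (by positivity)

private lemma Lam_pos' (n : ℤ × ℤ) : 0 < Lam n := add_pos (jap_pos' _) (jap_pos' _)

private lemma abs_add_half_le' (t : ℝ) : |t + 1/2| ≤ Real.sqrt 2 * jap t := by
  rw [jap, ← Real.sqrt_mul (by norm_num : (0:ℝ) ≤ 2), ← Real.sqrt_sq_eq_abs]
  apply Real.sqrt_le_sqrt; nlinarith [sq_nonneg (t - 1/2)]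

private lemma abs_add_one_le' (t : ℝ) : |t + 1| ≤ Real.sqrt 3 * jap t := by
  rw [jap, ← Real.sqrt_mul (by norm_num : (0:ℝ) ≤ 3), ← Real.sqrt_sq_eq_abs]
  apply Real.sqrt_le_sqrt; nlinarith [sq_nonneg (t - 1/2)]

private lemma two_jap_eq' (t : ℝ) : 2 * jap t = Real.sqrt (4 * (1/2 + t^2)) := by
  rw [jap, Real.sqrt_mul (by norm_num : (0:ℝ) ≤ 4)]
  rw [show (4:ℝ) = 2^2 by norm_num, Real.sqrt_sq (by norm_num : (0:ℝ) ≤ 2)]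

private lemma jap_add_one_le' (t : ℝ) : jap (t + 1) ≤ 2 * jap t := by
  rw [two_jap_eq', jap]
  apply Real.sqrt_le_sqrt; nlinarith [sq_nonneg (3*t - 1)]

private lemma jap_sub_one_le' (t : ℝ) : jap (t - 1) ≤ 2 * jap t := by
  rw [two_jap_eq', jap]
  apply Real.sqrt_le_sqrt; nlinarith [sq_nonneg (3*t + 1)]

private lemma rpow_shift' {x y ε : ℝ} (hx : 0 < x) (hy : 0 < y) (h : x ≤ 2*y) (hε : 0 ≤ ε) :
    x ^ ε ≤ 2^ε * y^ε := by
  calc x^ε ≤ (2*y)^ε := Real.rpow_le_rpow hx.le h hε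
  _ = 2^ε * y^ε := Real.mul_rpow (by norm_num) hy.le

private lemma norm_six' (A B C D E F : ℂ) :
    ‖A - B + C - D + E + F‖ ≤ ‖A‖ + ‖B‖ + ‖C‖ + ‖D‖ + ‖E‖ + ‖F‖ := by
  have h1 := norm_add_le (A - B + C - D + E) F
  have h2 := norm_add_le (A - B + C - D) E
  have h3 := norm_sub_le (A - B + C) D
  have h4 := norm_add_le (A - B) C
  have h5 := norm_sub_le A B
  linarith

private lemma step' {L a d j s C : ℝ} (hL : 0 ≤ L) (hd : 0 ≤ d) (ha : a ≤ s * j)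
    (hb : L * j * d ≤ C) (hs : 0 ≤ s) : L * (a * d) ≤ s * C := by
  calc L * (a*d) ≤ L * ((s*j)*d) :=
        mul_le_mul_of_nonneg_left (mul_le_mul_of_nonneg_right ha hd) hL
    _ = s * (L*j*d) := by ring
    _ ≤ s * C := mul_le_mul_of_nonneg_left hb hs

private def shiftE' (a b : ℤ) : ℤ×ℤ ≃ ℤ×ℤ where
  toFun n := (n.1 + a, n.2 + b)
  invFun n := (n.1 - a, n.2 - b)
  left_inv n := by simp
  right_inv n := by simp

private lemma comm_eq' (V : ℤ×ℤ → ℝ) (f : ℤ×ℤ → ℂ) (n : ℤ×ℤ) :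
    (V n : ℂ) * opA f n - opA (fun k => (V k:ℂ) * f k) n
    = (Complex.I/6) *
      ( (((n.1:ℝ)+1/2 : ℝ) : ℂ) * ((V n - V (n.1+1, n.2) : ℝ) : ℂ) * f (n.1+1,n.2)
      - (((n.1:ℝ)-1/2 : ℝ) : ℂ) * ((V n - V (n.1-1, n.2) : ℝ) : ℂ) * f (n.1-1,n.2)
      + (((n.2:ℝ)+1/2 : ℝ) : ℂ) * ((V n - V (n.1, n.2+1) : ℝ) : ℂ) * f (n.1,n.2+1)
      - (((n.2:ℝ)-1/2 : ℝ) : ℂ) * ((V n - V (n.1, n.2-1) : ℝ) : ℂ) * f (n.1,n.2-1)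
      + (((n.2:ℝ)-(n.1:ℝ)+1 : ℝ) : ℂ) * ((V n - V (n.1-1, n.2+1) : ℝ) : ℂ) * f (n.1-1,n.2+1)
      + (((n.1:ℝ)-(n.2:ℝ)+1 : ℝ) : ℂ) * ((V n - V (n.1+1, n.2-1) : ℝ) : ℂ) * f (n.1+1,n.2-1)) := by
  simp only [opA]; push_cast; ring

set_option maxHeartbeats 800000 in
private lemma key_ineq' {L X K a1 a2 a3 a4 a5 a6 s1 s2 s3 s4 s5 s6 : ℝ}
    (hL : 0 ≤ L) (hX0 : 0 ≤ X) (hK : 0 ≤ K)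
    (hs1 : 0 ≤ s1) (hs2 : 0 ≤ s2) (hs3 : 0 ≤ s3)
    (hs4 : 0 ≤ s4) (hs5 : 0 ≤ s5) (hs6 : 0 ≤ s6)
    (hX : X ≤ 1/6 * (a1*s1 + a2*s2 + a3*s3 + a4*s4 + a5*s5 + a6*s6))
    (h1 : L * a1 ≤ K) (h2 : L * a2 ≤ K) (h3 : L * a3 ≤ K)
    (h4 : L * a4 ≤ K) (h5 : L * a5 ≤ K) (h6 : L * a6 ≤ K) :
    (L*X)^2 ≤ K^2/6 * (s1^2 + s2^2 + s3^2 + s4^2 + s5^2 + s6^2) := by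
  have hLX : L*X ≤ 1/6 * (K*s1 + K*s2 + K*s3 + K*s4 + K*s5 + K*s6) := by
    have h0 : L*X ≤ L*(1/6*(a1*s1 + a2*s2 + a3*s3 + a4*s4 + a5*s5 + a6*s6)) :=
      mul_le_mul_of_nonneg_left hX hL
    have m1 := mul_le_mul_of_nonneg_right h1 hs1
    have m2 := mul_le_mul_of_nonneg_right h2 hs2
    have m3 := mul_le_mul_of_nonneg_right h3 hs3
    have m4 := mul_le_mul_of_nonneg_right h4 hs4
    have m5 := mul_le_mul_of_nonneg_right h5 hs5
    have m6 := mul_le_mul_of_nonneg_right h6 hs6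
    linarith [h0, m1, m2, m3, m4, m5, m6]
  calc (L*X)^2 ≤ (1/6 * (K*s1 + K*s2 + K*s3 + K*s4 + K*s5 + K*s6))^2 :=
        pow_le_pow_left₀ (mul_nonneg hL hX0) hLX 2
    _ = K^2/36 * (s1 + s2 + s3 + s4 + s5 + s6)^2 := by ring
    _ ≤ K^2/36 * (6 * (s1^2 + s2^2 + s3^2 + s4^2 + s5^2 + s6^2)) := by
        refine mul_le_mul_of_nonneg_left ?_ (by positivity)
        nlinarith [sq_nonneg (s1-s2), sq_nonneg (s1-s3), sq_nonneg (s1-s4),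
          sq_nonneg (s1-s5), sq_nonneg (s1-s6), sq_nonneg (s2-s3), sq_nonneg (s2-s4),
          sq_nonneg (s2-s5), sq_nonneg (s2-s6), sq_nonneg (s3-s4), sq_nonneg (s3-s5),
          sq_nonneg (s3-s6), sq_nonneg (s4-s5), sq_nonneg (s4-s6), sq_nonneg (s5-s6)]
    _ = K^2/6 * (s1^2 + s2^2 + s3^2 + s4^2 + s5^2 + s6^2) := by ring

set_option maxHeartbeats 1000000 in
/-- under `(H'₁)-(H'₃)`, `Λ^ε(Q)[V(Q), A]` extends to a bounded operator. -/
theorem weighted_commutator_potential_bounded (ε : ℝ) (hε : 0 < ε) (V : ℤ × ℤ → ℝ)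
    (hVbdd : ∃ C : ℝ, ∀ n : ℤ × ℤ, |V n| ≤ C)
    (hV1 : ∃ C : ℝ, ∀ n : ℤ × ℤ,
      Lam n ^ ε * jap (n.1 : ℝ) * |V n - V (n.1 + 1, n.2)| ≤ C)
    (hV2 : ∃ C : ℝ, ∀ n : ℤ × ℤ,
      Lam n ^ ε * jap (n.2 : ℝ) * |V n - V (n.1, n.2 + 1)| ≤ C)
    (hV3 : ∃ C : ℝ, ∀ n : ℤ × ℤ,
      Lam n ^ ε * jap ((n.1 : ℝ) - (n.2 : ℝ)) * |V n - V (n.1 + 1, n.2 - 1)| ≤ C) :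
    ∃ c > 0, ∀ f : ℤ × ℤ → ℂ, (Function.support f).Finite →
      ∑' n : ℤ × ℤ, Lam n ^ (2 * ε) *
          ‖(V n : ℂ) * opA f n - opA (fun k => (V k : ℂ) * f k) n‖ ^ 2
        ≤ c * ∑' n : ℤ × ℤ, ‖f n‖ ^ 2 := by
  obtain ⟨C1, hC1⟩ := hV1
  obtain ⟨C2, hC2⟩ := hV2
  obtain ⟨C3, hC3⟩ := hV3
  obtain ⟨Cm, hCm, hB1, hB2, hB3⟩ : ∃ Cm : ℝ, 0 ≤ Cm
      ∧ (∀ n : ℤ × ℤ, Lam n ^ ε * jap (n.1 : ℝ) * |V n - V (n.1 + 1, n.2)| ≤ Cm)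
      ∧ (∀ n : ℤ × ℤ, Lam n ^ ε * jap (n.2 : ℝ) * |V n - V (n.1, n.2 + 1)| ≤ Cm)
      ∧ (∀ n : ℤ × ℤ,
          Lam n ^ ε * jap ((n.1 : ℝ) - (n.2 : ℝ)) * |V n - V (n.1 + 1, n.2 - 1)| ≤ Cm) := by
    refine ⟨|C1| + |C2| + |C3|, by positivity, fun n => ?_, fun n => ?_, fun n => ?_⟩
    · have h := hC1 n
      have h1 := le_abs_self C1; have h2 := abs_nonneg C2; have h3 := abs_nonneg C3
      linarith
    · have h := hC2 n
      have h1 := le_abs_self C2; have h2 := abs_nonneg C1; have h3 := abs_nonneg C3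
      linarith
    · have h := hC3 n
      have h1 := le_abs_self C3; have h2 := abs_nonneg C1; have h3 := abs_nonneg C2
      linarith
  have h2e : (1:ℝ) ≤ (2:ℝ) ^ ε := Real.one_le_rpow one_le_two hε.le
  have h2e0 : (0:ℝ) ≤ (2:ℝ) ^ ε := by positivity
  have hs2 : (0:ℝ) ≤ Real.sqrt 2 := Real.sqrt_nonneg 2
  have hs3 : (0:ℝ) ≤ Real.sqrt 3 := Real.sqrt_nonneg 3
  have h23 : Real.sqrt 2 ≤ Real.sqrt 3 := Real.sqrt_le_sqrt (by norm_num)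
  obtain ⟨K, hK0, hK2, hK3, hK2', hK3'⟩ : ∃ K : ℝ, 0 < K
      ∧ Real.sqrt 2 * Cm ≤ K ∧ Real.sqrt 3 * Cm ≤ K
      ∧ (2:ℝ)^ε * (Real.sqrt 2 * Cm) ≤ K ∧ (2:ℝ)^ε * (Real.sqrt 3 * Cm) ≤ K := by
    have hfac1 : (0:ℝ) ≤ ((2:ℝ)^ε - 1) * (Real.sqrt 3 * Cm) :=
      mul_nonneg (by linarith) (mul_nonneg hs3 hCm)
    have hfac2 : (0:ℝ) ≤ (Real.sqrt 3 - Real.sqrt 2) * Cm := mul_nonneg (by linarith) hCm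
    have hmono : (2:ℝ)^ε * (Real.sqrt 2 * Cm) ≤ (2:ℝ)^ε * (Real.sqrt 3 * Cm) :=
      mul_le_mul_of_nonneg_left (mul_le_mul_of_nonneg_right h23 hCm) h2e0
    refine ⟨(2:ℝ)^ε * (Real.sqrt 3 * Cm) + 1, by positivity, by nlinarith, by nlinarith,
      by linarith, by linarith⟩
  -- the six coefficient bounds
  have hT1 : ∀ n : ℤ × ℤ,
      Lam n ^ ε * (|(n.1:ℝ) + 1/2| * |V n - V (n.1+1, n.2)|) ≤ K := by
    intro n
    have h := step' (Real.rpow_nonneg (Lam_pos' n).le ε) (abs_nonneg _)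
      (abs_add_half_le' (n.1:ℝ)) (hB1 n) hs2
    exact h.trans hK2
  have hT3 : ∀ n : ℤ × ℤ,
      Lam n ^ ε * (|(n.2:ℝ) + 1/2| * |V n - V (n.1, n.2+1)|) ≤ K := by
    intro n
    have h := step' (Real.rpow_nonneg (Lam_pos' n).le ε) (abs_nonneg _)
      (abs_add_half_le' (n.2:ℝ)) (hB2 n) hs2
    exact h.trans hK2
  have hT5 : ∀ n : ℤ × ℤ,
      Lam n ^ ε * (|(n.1:ℝ) - (n.2:ℝ) + 1| * |V n - V (n.1+1, n.2-1)|) ≤ K := by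
    intro n
    have h := step' (Real.rpow_nonneg (Lam_pos' n).le ε) (abs_nonneg _)
      (abs_add_one_le' ((n.1:ℝ) - (n.2:ℝ))) (hB3 n) hs3
    exact h.trans hK3
  have hT2 : ∀ n : ℤ × ℤ,
      Lam n ^ ε * (|(n.1:ℝ) - 1/2| * |V n - V (n.1-1, n.2)|) ≤ K := by
    intro n
    have hm : Lam (n.1-1, n.2) ^ ε * jap ((n.1:ℝ) - 1) * |V (n.1-1, n.2) - V n| ≤ Cm := by
      have h := hB1 (n.1-1, n.2)
      push_cast at h
      simpa [sub_add_cancel] using h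
    have ha : |(n.1:ℝ) - 1/2| ≤ Real.sqrt 2 * jap ((n.1:ℝ) - 1) := by
      have h := abs_add_half_le' ((n.1:ℝ) - 1)
      rwa [show (n.1:ℝ) - 1 + 1/2 = (n.1:ℝ) - 1/2 by ring] at h
    have hL : Lam n ≤ 2 * Lam (n.1-1, n.2) := by
      have h1 := jap_add_one_le' ((n.1:ℝ) - 1)
      rw [show (n.1:ℝ) - 1 + 1 = (n.1:ℝ) by ring] at h1
      have h2 := jap_pos' ((n.2:ℝ))
      simp only [Lam]; push_cast; linarith
    have hrp := rpow_shift' (Lam_pos' n) (Lam_pos' (n.1-1, n.2)) hL hε.le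
    rw [abs_sub_comm (V n)]
    calc Lam n ^ ε * (|(n.1:ℝ) - 1/2| * |V (n.1-1, n.2) - V n|)
        ≤ ((2:ℝ)^ε * Lam (n.1-1, n.2) ^ ε) * (|(n.1:ℝ) - 1/2| * |V (n.1-1, n.2) - V n|) :=
          mul_le_mul_of_nonneg_right hrp (by positivity)
      _ = (2:ℝ)^ε * (Lam (n.1-1, n.2) ^ ε * (|(n.1:ℝ) - 1/2| * |V (n.1-1, n.2) - V n|)) := by
          ring
      _ ≤ (2:ℝ)^ε * (Real.sqrt 2 * Cm) := by
          refine mul_le_mul_of_nonneg_left ?_ h2e0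
          exact step' (Real.rpow_nonneg (Lam_pos' _).le ε) (abs_nonneg _) ha hm hs2
      _ ≤ K := hK2'
  have hT4 : ∀ n : ℤ × ℤ,
      Lam n ^ ε * (|(n.2:ℝ) - 1/2| * |V n - V (n.1, n.2-1)|) ≤ K := by
    intro n
    have hm : Lam (n.1, n.2-1) ^ ε * jap ((n.2:ℝ) - 1) * |V (n.1, n.2-1) - V n| ≤ Cm := by
      have h := hB2 (n.1, n.2-1)
      push_cast at h
      simpa [sub_add_cancel] using h
    have ha : |(n.2:ℝ) - 1/2| ≤ Real.sqrt 2 * jap ((n.2:ℝ) - 1) := by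
      have h := abs_add_half_le' ((n.2:ℝ) - 1)
      rwa [show (n.2:ℝ) - 1 + 1/2 = (n.2:ℝ) - 1/2 by ring] at h
    have hL : Lam n ≤ 2 * Lam (n.1, n.2-1) := by
      have h1 := jap_add_one_le' ((n.2:ℝ) - 1)
      rw [show (n.2:ℝ) - 1 + 1 = (n.2:ℝ) by ring] at h1
      have h2 := jap_pos' ((n.1:ℝ))
      simp only [Lam]; push_cast; linarith
    have hrp := rpow_shift' (Lam_pos' n) (Lam_pos' (n.1, n.2-1)) hL hε.le
    rw [abs_sub_comm (V n)]
    calc Lam n ^ ε * (|(n.2:ℝ) - 1/2| * |V (n.1, n.2-1) - V n|)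
        ≤ ((2:ℝ)^ε * Lam (n.1, n.2-1) ^ ε) * (|(n.2:ℝ) - 1/2| * |V (n.1, n.2-1) - V n|) :=
          mul_le_mul_of_nonneg_right hrp (by positivity)
      _ = (2:ℝ)^ε * (Lam (n.1, n.2-1) ^ ε * (|(n.2:ℝ) - 1/2| * |V (n.1, n.2-1) - V n|)) := by
          ring
      _ ≤ (2:ℝ)^ε * (Real.sqrt 2 * Cm) := by
          refine mul_le_mul_of_nonneg_left ?_ h2e0
          exact step' (Real.rpow_nonneg (Lam_pos' _).le ε) (abs_nonneg _) ha hm hs2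
      _ ≤ K := hK2'
  have hT6 : ∀ n : ℤ × ℤ,
      Lam n ^ ε * (|(n.2:ℝ) - (n.1:ℝ) + 1| * |V n - V (n.1-1, n.2+1)|) ≤ K := by
    intro n
    have hm : Lam (n.1-1, n.2+1) ^ ε * jap ((n.1:ℝ) - 1 - ((n.2:ℝ) + 1))
        * |V (n.1-1, n.2+1) - V n| ≤ Cm := by
      have h := hB3 (n.1-1, n.2+1)
      push_cast at h
      simpa [sub_add_cancel, add_sub_cancel_right] using h
    have ha : |(n.2:ℝ) - (n.1:ℝ) + 1| ≤ Real.sqrt 3 * jap ((n.1:ℝ) - 1 - ((n.2:ℝ) + 1)) := by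
      have h := abs_add_one_le' ((n.1:ℝ) - 1 - ((n.2:ℝ) + 1))
      rwa [show (n.1:ℝ) - 1 - ((n.2:ℝ) + 1) + 1 = -((n.2:ℝ) - (n.1:ℝ) + 1) by ring,
        abs_neg] at h
    have hL : Lam n ≤ 2 * Lam (n.1-1, n.2+1) := by
      have h1 := jap_add_one_le' ((n.1:ℝ) - 1)
      rw [show (n.1:ℝ) - 1 + 1 = (n.1:ℝ) by ring] at h1
      have h2 := jap_sub_one_le' ((n.2:ℝ) + 1)
      rw [show (n.2:ℝ) + 1 - 1 = (n.2:ℝ) by ring] at h2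
      simp only [Lam]; push_cast; linarith
    have hrp := rpow_shift' (Lam_pos' n) (Lam_pos' (n.1-1, n.2+1)) hL hε.le
    rw [abs_sub_comm (V n)]
    calc Lam n ^ ε * (|(n.2:ℝ) - (n.1:ℝ) + 1| * |V (n.1-1, n.2+1) - V n|)
        ≤ ((2:ℝ)^ε * Lam (n.1-1, n.2+1) ^ ε)
            * (|(n.2:ℝ) - (n.1:ℝ) + 1| * |V (n.1-1, n.2+1) - V n|) :=
          mul_le_mul_of_nonneg_right hrp (by positivity)
      _ = (2:ℝ)^ε * (Lam (n.1-1, n.2+1) ^ ε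
            * (|(n.2:ℝ) - (n.1:ℝ) + 1| * |V (n.1-1, n.2+1) - V n|)) := by ring
      _ ≤ (2:ℝ)^ε * (Real.sqrt 3 * Cm) := by
          refine mul_le_mul_of_nonneg_left ?_ h2e0
          exact step' (Real.rpow_nonneg (Lam_pos' _).le ε) (abs_nonneg _) ha hm hs3
      _ ≤ K := hK3'
  refine ⟨K^2, pow_pos hK0 2, ?_⟩
  intro f hf
  -- pointwise key estimate
  have key : ∀ n : ℤ × ℤ, Lam n ^ (2 * ε) *
      ‖(V n : ℂ) * opA f n - opA (fun k => (V k : ℂ) * f k) n‖ ^ 2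
      ≤ K^2/6 * (‖f (n.1+1, n.2)‖^2 + ‖f (n.1-1, n.2)‖^2 + ‖f (n.1, n.2+1)‖^2
        + ‖f (n.1, n.2-1)‖^2 + ‖f (n.1-1, n.2+1)‖^2 + ‖f (n.1+1, n.2-1)‖^2) := by
    intro n
    have hLnn : (0:ℝ) ≤ Lam n ^ ε := Real.rpow_nonneg (Lam_pos' n).le ε
    have hX : ‖(V n : ℂ) * opA f n - opA (fun k => (V k : ℂ) * f k) n‖
        ≤ 1/6 * ( |(n.1:ℝ)+1/2| * |V n - V (n.1+1, n.2)| * ‖f (n.1+1, n.2)‖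
        + |(n.1:ℝ)-1/2| * |V n - V (n.1-1, n.2)| * ‖f (n.1-1, n.2)‖
        + |(n.2:ℝ)+1/2| * |V n - V (n.1, n.2+1)| * ‖f (n.1, n.2+1)‖
        + |(n.2:ℝ)-1/2| * |V n - V (n.1, n.2-1)| * ‖f (n.1, n.2-1)‖
        + |(n.2:ℝ)-(n.1:ℝ)+1| * |V n - V (n.1-1, n.2+1)| * ‖f (n.1-1, n.2+1)‖
        + |(n.1:ℝ)-(n.2:ℝ)+1| * |V n - V (n.1+1, n.2-1)| * ‖f (n.1+1, n.2-1)‖ ) := by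
      rw [comm_eq', norm_mul, show ‖Complex.I/6‖ = 1/6 by simp]
      refine mul_le_mul_of_nonneg_left ?_ (by norm_num)
      refine (norm_six' _ _ _ _ _ _).trans ?_
      simp only [norm_mul, Complex.norm_real, Real.norm_eq_abs]
      exact le_rfl
    have h2 : Lam n ^ (2*ε) = Lam n ^ ε * Lam n ^ ε := by
      rw [two_mul, Real.rpow_add (Lam_pos' n)]
    calc Lam n ^ (2 * ε) * ‖(V n : ℂ) * opA f n - opA (fun k => (V k : ℂ) * f k) n‖ ^ 2
        = (Lam n ^ ε * ‖(V n : ℂ) * opA f n - opA (fun k => (V k : ℂ) * f k) n‖)^2 := by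
          rw [h2]; ring
      _ ≤ K^2/6 * (‖f (n.1+1, n.2)‖^2 + ‖f (n.1-1, n.2)‖^2 + ‖f (n.1, n.2+1)‖^2
          + ‖f (n.1, n.2-1)‖^2 + ‖f (n.1-1, n.2+1)‖^2 + ‖f (n.1+1, n.2-1)‖^2) :=
          key_ineq' hLnn (norm_nonneg _) hK0.le (norm_nonneg _) (norm_nonneg _)
            (norm_nonneg _) (norm_nonneg _) (norm_nonneg _) (norm_nonneg _) hX
            (hT1 n) (hT2 n) (hT3 n) (hT4 n) (hT6 n) (hT5 n)
  -- summability
  have hg : Summable (fun n : ℤ × ℤ => ‖f n‖^2) := by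
    apply summable_of_ne_finset_zero (s := hf.toFinset)
    intro n hn
    simp only [Set.Finite.mem_toFinset, Function.mem_support, not_not] at hn
    simp [hn]
  have hq1 : Summable (fun n : ℤ × ℤ => ‖f (n.1+1, n.2)‖^2) := by
    simpa [shiftE', Function.comp_def] using
      (Equiv.summable_iff (shiftE' 1 0)).2 hg
  have hq2 : Summable (fun n : ℤ × ℤ => ‖f (n.1-1, n.2)‖^2) := by
    simpa [shiftE', Function.comp_def, sub_eq_add_neg] using
      (Equiv.summable_iff (shiftE' (-1) 0)).2 hg
  have hq3 : Summable (fun n : ℤ × ℤ => ‖f (n.1, n.2+1)‖^2) := by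
    simpa [shiftE', Function.comp_def] using
      (Equiv.summable_iff (shiftE' 0 1)).2 hg
  have hq4 : Summable (fun n : ℤ × ℤ => ‖f (n.1, n.2-1)‖^2) := by
    simpa [shiftE', Function.comp_def, sub_eq_add_neg] using
      (Equiv.summable_iff (shiftE' 0 (-1))).2 hg
  have hq5 : Summable (fun n : ℤ × ℤ => ‖f (n.1-1, n.2+1)‖^2) := by
    simpa [shiftE', Function.comp_def, sub_eq_add_neg] using
      (Equiv.summable_iff (shiftE' (-1) 1)).2 hg
  have hq6 : Summable (fun n : ℤ × ℤ => ‖f (n.1+1, n.2-1)‖^2) := by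
    simpa [shiftE', Function.comp_def, sub_eq_add_neg] using
      (Equiv.summable_iff (shiftE' 1 (-1))).2 hg
  have he1 : ∑' n : ℤ × ℤ, ‖f (n.1+1, n.2)‖^2 = ∑' n : ℤ × ℤ, ‖f n‖^2 := by
    simpa [shiftE'] using (shiftE' 1 0).tsum_eq (fun n => ‖f n‖^2)
  have he2 : ∑' n : ℤ × ℤ, ‖f (n.1-1, n.2)‖^2 = ∑' n : ℤ × ℤ, ‖f n‖^2 := by
    simpa [shiftE', sub_eq_add_neg] using (shiftE' (-1) 0).tsum_eq (fun n => ‖f n‖^2)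
  have he3 : ∑' n : ℤ × ℤ, ‖f (n.1, n.2+1)‖^2 = ∑' n : ℤ × ℤ, ‖f n‖^2 := by
    simpa [shiftE'] using (shiftE' 0 1).tsum_eq (fun n => ‖f n‖^2)
  have he4 : ∑' n : ℤ × ℤ, ‖f (n.1, n.2-1)‖^2 = ∑' n : ℤ × ℤ, ‖f n‖^2 := by
    simpa [shiftE', sub_eq_add_neg] using (shiftE' 0 (-1)).tsum_eq (fun n => ‖f n‖^2)
  have he5 : ∑' n : ℤ × ℤ, ‖f (n.1-1, n.2+1)‖^2 = ∑' n : ℤ × ℤ, ‖f n‖^2 := by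
    simpa [shiftE', sub_eq_add_neg] using (shiftE' (-1) 1).tsum_eq (fun n => ‖f n‖^2)
  have he6 : ∑' n : ℤ × ℤ, ‖f (n.1+1, n.2-1)‖^2 = ∑' n : ℤ × ℤ, ‖f n‖^2 := by
    simpa [shiftE', sub_eq_add_neg] using (shiftE' 1 (-1)).tsum_eq (fun n => ‖f n‖^2)
  have hsum6 : Summable (fun n : ℤ × ℤ => ‖f (n.1+1, n.2)‖^2 + ‖f (n.1-1, n.2)‖^2
      + ‖f (n.1, n.2+1)‖^2 + ‖f (n.1, n.2-1)‖^2 + ‖f (n.1-1, n.2+1)‖^2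
      + ‖f (n.1+1, n.2-1)‖^2) :=
    ((((hq1.add hq2).add hq3).add hq4).add hq5).add hq6
  have hS : Summable (fun n : ℤ × ℤ => K^2/6 * (‖f (n.1+1, n.2)‖^2 + ‖f (n.1-1, n.2)‖^2
      + ‖f (n.1, n.2+1)‖^2 + ‖f (n.1, n.2-1)‖^2 + ‖f (n.1-1, n.2+1)‖^2
      + ‖f (n.1+1, n.2-1)‖^2)) := hsum6.mul_left _
  have hLHS : Summable (fun n : ℤ × ℤ => Lam n ^ (2 * ε) *
      ‖(V n : ℂ) * opA f n - opA (fun k => (V k : ℂ) * f k) n‖ ^ 2) := by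
    refine Summable.of_nonneg_of_le (fun n => ?_) key hS
    exact mul_nonneg (Real.rpow_nonneg (Lam_pos' n).le _) (by positivity)
  have htadd : ∑' n : ℤ × ℤ, (‖f (n.1+1, n.2)‖^2 + ‖f (n.1-1, n.2)‖^2
      + ‖f (n.1, n.2+1)‖^2 + ‖f (n.1, n.2-1)‖^2 + ‖f (n.1-1, n.2+1)‖^2
      + ‖f (n.1+1, n.2-1)‖^2) = 6 * ∑' n : ℤ × ℤ, ‖f n‖^2 := by
    rw [Summable.tsum_add ((((hq1.add hq2).add hq3).add hq4).add hq5) hq6,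
      Summable.tsum_add (((hq1.add hq2).add hq3).add hq4) hq5,
      Summable.tsum_add ((hq1.add hq2).add hq3) hq4,
      Summable.tsum_add (hq1.add hq2) hq3,
      Summable.tsum_add hq1 hq2, he1, he2, he3, he4, he5, he6]
    ring
  calc ∑' n : ℤ × ℤ, Lam n ^ (2 * ε) *
        ‖(V n : ℂ) * opA f n - opA (fun k => (V k : ℂ) * f k) n‖ ^ 2
      ≤ ∑' n : ℤ × ℤ, K^2/6 * (‖f (n.1+1, n.2)‖^2 + ‖f (n.1-1, n.2)‖^2
        + ‖f (n.1, n.2+1)‖^2 + ‖f (n.1, n.2-1)‖^2 + ‖f (n.1-1, n.2+1)‖^2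
        + ‖f (n.1+1, n.2-1)‖^2) := Summable.tsum_le_tsum key hLHS hS
    _ = K^2/6 * ∑' n : ℤ × ℤ, (‖f (n.1+1, n.2)‖^2 + ‖f (n.1-1, n.2)‖^2
        + ‖f (n.1, n.2+1)‖^2 + ‖f (n.1, n.2-1)‖^2 + ‖f (n.1-1, n.2+1)‖^2
        + ‖f (n.1+1, n.2-1)‖^2) := tsum_mul_left
    _ = K^2/6 * (6 * ∑' n : ℤ × ℤ, ‖f n‖^2) := by rw [htadd]
    _ = K^2 * ∑' n : ℤ × ℤ, ‖f n‖^2 := by ring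
end
end
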